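/- arXiv:1711.09974 — 9 statements merged into one kernel-verified Lean document; each statement's English description precedes it below -/
import Mathlib

section
/- Let r ≥ 0 and let D be a model distance function. Then the robust Nadaraya–Watson value sup{ c(M) : M a model on 𝔐 with D(M, M_t) ≤ r } equals the value of the convex program sup{ Σ_{m∈𝔐} w(m)·ℓ(m)·P(m) : s > 0, P : 𝔐 → [0,∞), Σ_{m∈𝔐} P(m) = s, Σ_{m∈𝔐} w(m)·P(m) = 1, s·D(P/s, M_t) ≤ s·r }. -/
open Finset

/-- A model on a finite set `𝔐` : nonnegative weights summing to one. -/
def IsModel {𝔐 : Type*} [Fintype 𝔐] (M : 𝔐 → ℝ) : Prop :=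
  (∀ m, 0 ≤ M m) ∧ ∑ m, M m = 1

/-- A model distance function: nonnegative, convex in its first argument,
and discriminating on models. -/
def IsModelDistance {𝔐 : Type*} [Fintype 𝔐] (D : (𝔐 → ℝ) → (𝔐 → ℝ) → ℝ) : Prop :=
  (∀ M M', IsModel M → IsModel M' → 0 ≤ D M M') ∧
  (∀ M', IsModel M' → ConvexOn ℝ {M | IsModel M} (fun M => D M M')) ∧
  (∀ M M', IsModel M → IsModel M' → (D M M' = 0 ↔ M = M'))

/-- The robust Nadaraya–Watson value equals the value of the
convex program obtained by the change of variables `P = s · M`. -/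
theorem robust_nadaraya_watson_primal_reformulation
    {𝔐 : Type*} [Fintype 𝔐] [Nonempty 𝔐]
    (w ℓ : 𝔐 → ℝ) (hw : ∀ m, 0 < w m)
    (Mt : 𝔐 → ℝ) (hMt : IsModel Mt) (hMtpos : ∀ m, 0 < Mt m)
    (D : (𝔐 → ℝ) → (𝔐 → ℝ) → ℝ) (hD : IsModelDistance D)
    (r : ℝ) (hr : 0 ≤ r) :
    sSup {v : ℝ | ∃ M : 𝔐 → ℝ, IsModel M ∧ D M Mt ≤ r ∧
        v = (∑ m, w m * ℓ m * M m) / (∑ m, w m * M m)} =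
    sSup {v : ℝ | ∃ s : ℝ, 0 < s ∧ ∃ P : 𝔐 → ℝ, (∀ m, 0 ≤ P m) ∧
        (∑ m, P m) = s ∧ (∑ m, w m * P m) = 1 ∧
        s * D (fun m => P m / s) Mt ≤ s * r ∧
        v = ∑ m, w m * ℓ m * P m} := by
  congr 1
  ext v
  simp only [Set.mem_setOf_eq]
  constructor
  · rintro ⟨M, hM, hDr, rfl⟩
    have hpos : 0 < ∑ m, w m * M m := by
      obtain ⟨m0, hm0⟩ : ∃ m, 0 < M m := by
        by_contra h
        push_neg at h
        have hz : ∀ m, M m = 0 := fun m => le_antisymm (h m) (hM.1 m)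
        have := hM.2
        simp [hz] at this
      exact Finset.sum_pos' (fun i _ => mul_nonneg (hw i).le (hM.1 i))
        ⟨m0, Finset.mem_univ _, mul_pos (hw m0) hm0⟩
    set s : ℝ := (∑ m, w m * M m)⁻¹ with hs
    have hs0 : 0 < s := inv_pos.mpr hpos
    refine ⟨s, hs0, fun m => s * M m, fun m => mul_nonneg hs0.le (hM.1 m), ?_, ?_, ?_, ?_⟩
    · rw [← Finset.mul_sum, hM.2, mul_one]
    · have : ∑ m, w m * (s * M m) = s * ∑ m, w m * M m := by
        rw [Finset.mul_sum]; congr 1; ext m; ring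
      rw [this, hs, inv_mul_cancel₀ hpos.ne']
    · have hMeq : (fun m => s * M m / s) = M := by
        funext m; field_simp
      rw [hMeq]
      exact mul_le_mul_of_nonneg_left hDr hs0.le
    · rw [div_eq_inv_mul, ← hs, Finset.mul_sum]
      congr 1; ext m; ring
  · rintro ⟨s, hs, P, hP, hsum, hwsum, hdist, rfl⟩
    refine ⟨fun m => P m / s, ⟨fun m => div_nonneg (hP m) hs.le, ?_⟩, ?_, ?_⟩
    · rw [← Finset.sum_div, hsum, div_self hs.ne']
    · exact le_of_mul_le_mul_left (by simpa using hdist) hs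
    · have h1 : ∑ m, w m * ℓ m * (P m / s) = (∑ m, w m * ℓ m * P m) / s := by
        rw [Finset.sum_div]; exact Finset.sum_congr rfl fun m _ => by ring
      have h2 : ∑ m, w m * (P m / s) = 1 / s := by
        rw [← hwsum, Finset.sum_div]; exact Finset.sum_congr rfl fun m _ => by ring
      rw [h1, h2]
      field_simp
end

section
/- Let r ≥ 0 and let D be a model distance function. The map M ↦ (s, P) with s = 1/(Σ_{m∈𝔐} w(m)·M(m)) and P = s·M is a bijection from the set {M a model on 𝔐 : D(M, M_t) ≤ r} onto the set {(s, P) : s > 0, P : 𝔐 → [0,∞), Σ_{m∈𝔐} P(m) = s, Σ_{m∈𝔐} w(m)·P(m) = 1, s·D(P/s, M_t) ≤ s·r}, with inverse (s, P) ↦ P/s, and for every such M one has Σ_{m∈𝔐} w(m)·ℓ(m)·P(m) = c(M). -/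
open Finset

/-- The change of variables `M ↦ (s, P)` with
`s = 1 / (∑ m, w m * M m)` and `P = s • M` is a bijection from the feasible set
of the robust Nadaraya–Watson problem onto the feasible set of its convex
reformulation, with inverse `(s, P) ↦ P / s`, and it maps the objective
`∑ m, w m * ℓ m * P m` to the Nadaraya–Watson cost `c(M)`. -/
theorem robust_nadaraya_watson_change_of_variables
    {𝔐 : Type*} [Fintype 𝔐] [Nonempty 𝔐]
    (w ℓ : 𝔐 → ℝ) (hw : ∀ m, 0 < w m)
    (Mt : 𝔐 → ℝ) (hMt : IsModel Mt) (hMtpos : ∀ m, 0 < Mt m)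
    (D : (𝔐 → ℝ) → (𝔐 → ℝ) → ℝ) (hD : IsModelDistance D)
    (r : ℝ) (hr : 0 ≤ r)
    (A : Set (𝔐 → ℝ)) (hA : A = {M | IsModel M ∧ D M Mt ≤ r})
    (B : Set (ℝ × (𝔐 → ℝ)))
    (hB : B = {p | 0 < p.1 ∧ (∀ m, 0 ≤ p.2 m) ∧ (∑ m, p.2 m) = p.1 ∧
        (∑ m, w m * p.2 m) = 1 ∧
        p.1 * D (fun m => p.2 m / p.1) Mt ≤ p.1 * r})
    (Φ : (𝔐 → ℝ) → ℝ × (𝔐 → ℝ))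
    (hΦ : Φ = fun M => (1 / (∑ m, w m * M m), fun m => M m / (∑ m', w m' * M m'))) :
    (∀ M ∈ A, Φ M ∈ B ∧ (fun m => (Φ M).2 m / (Φ M).1) = M ∧
        (∑ m, w m * ℓ m * (Φ M).2 m) =
          (∑ m, w m * ℓ m * M m) / (∑ m, w m * M m)) ∧
    (∀ p ∈ B, (fun m => p.2 m / p.1) ∈ A ∧ Φ (fun m => p.2 m / p.1) = p) := by
  subst hΦ hA hB
  constructor
  · rintro M ⟨⟨hMnn, hMsum⟩, hDle⟩
    set S := ∑ m', w m' * M m' with hS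
    have hSpos : 0 < S := by
      have h1 : (0:ℝ) < ∑ m, M m := by rw [hMsum]; norm_num
      obtain ⟨m0, _, hm0⟩ := Finset.exists_lt_of_sum_lt (by simpa using h1 :
        ∑ _m ∈ Finset.univ, (0:ℝ) < ∑ m ∈ Finset.univ, M m)
      exact Finset.sum_pos' (fun m _ => mul_nonneg (hw m).le (hMnn m))
        ⟨m0, Finset.mem_univ m0, mul_pos (hw m0) hm0⟩
    have hSne : S ≠ 0 := hSpos.ne'
    have hinv : (fun m => (M m / S) / (1 / S)) = M := by
      funext m; field_simp
    refine ⟨⟨by positivity, fun m => div_nonneg (hMnn m) hSpos.le, ?_, ?_, ?_⟩,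
      hinv, ?_⟩
    · simp [← Finset.sum_div, hMsum]
    · rw [show (∑ m, w m * (M m / S)) = (∑ m, w m * M m) / S by
        rw [Finset.sum_div]; congr 1; funext m; ring]
      field_simp
      exact hS.symm
    · simp only [hinv]
      rw [show (fun m => (M m / ∑ m, w m * M m) / (1 / ∑ m, w m * M m)) = M from hinv]
      exact mul_le_mul_of_nonneg_left hDle (by positivity)
    · rw [Finset.sum_div]; congr 1; funext m; ring
  · rintro ⟨s, P⟩ ⟨hs, hPnn, hPsum, hwP, hDle⟩
    simp only at *
    have hsne : s ≠ 0 := hs.ne'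
    have hmodel : IsModel (fun m => P m / s) :=
      ⟨fun m => div_nonneg (hPnn m) hs.le, by
        rw [← Finset.sum_div, hPsum]; field_simp⟩
    refine ⟨⟨hmodel, le_of_mul_le_mul_left hDle hs⟩, ?_⟩
    have hwsum : (∑ m', w m' * (P m' / s)) = 1 / s := by
      rw [show (∑ m', w m' * (P m' / s)) = (∑ m', w m' * P m') / s by
        rw [Finset.sum_div]; congr 1; funext m; ring, hwP]
    ext
    · simp [hwsum]
    · simp only [hwsum]; field_simp
end

section
/- Assume 1 ≤ k ≤ n. Every model on 𝔐 belongs to at most one of the model sets 𝒩_1, …, 𝒩_J; write j(M) for that index when it exists. Let r ≥ 0 and let D be a model distance function. Then, with suprema taken in ℝ ∪ {−∞} (a supremum over an empty set being −∞), sup{ c_{j(M)}(M) : M a model on 𝔐 with M ∈ 𝒩_j for some j and D(M, M_t) ≤ r } = max over j ∈ {1,…,J} of sup{ Σ_{m∈N_j} w(m)·ℓ(m)·P(m) : s > 0, P : 𝔐 → [0,∞), Σ_{m∈N_j} w(m)·P(m) = 1, Σ_{m∈𝔐} P(m) = s, Σ_{m∈N_j} P(m) ≥ s·k/n, Σ_{m∈N_{j−1}}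 P(m) ≤ s·(k−1)/n, s·D(P/s, M_t) ≤ s·r }. -/
open Finset

/-- Membership of (the weight function of) a model in the `j`-th model set
`𝒩_j` determined by the nested neighborhoods `N`, with `k` nearest neighbors
out of `n` data points. -/
def MemNbhdModelSet {𝔐 : Type*} [Fintype 𝔐] (N : ℕ → Finset 𝔐) (n k : ℕ)
    (j : ℕ) (M : 𝔐 → ℝ) : Prop :=
  (k : ℝ) / n ≤ ∑ m ∈ N j, M m ∧ ∑ m ∈ N (j - 1), M m ≤ ((k : ℝ) - 1) / n

/-- Every model belongs to at most one of the model sets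
`𝒩_1, …, 𝒩_J`, and the robust nearest-neighbors value (a supremum in
`ℝ ∪ {−∞}`, realized here inside `EReal`) equals the maximum over
`j ∈ {1, …, J}` of the values of the partial convex programs. -/
theorem robust_nearest_neighbors_primal_reformulation
    {𝔐 : Type*} [Fintype 𝔐] [Nonempty 𝔐]
    (w ℓ : 𝔐 → ℝ) (hw : ∀ m, 0 < w m)
    (Mt : 𝔐 → ℝ) (hMt : IsModel Mt) (hMtpos : ∀ m, 0 < Mt m)
    (D : (𝔐 → ℝ) → (𝔐 → ℝ) → ℝ) (hD : IsModelDistance D)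
    (n k : ℕ) (hk : 1 ≤ k) (hkn : k ≤ n)
    (J : ℕ) (N : ℕ → Finset 𝔐)
    (hN0 : N 0 = ∅) (hNJ : N J = Finset.univ)
    (hNcard : ∀ j ≤ J, (N j).card = j)
    (hNmono : ∀ j < J, N j ⊆ N (j + 1))
    (r : ℝ) (hr : 0 ≤ r) :
    (∀ M : 𝔐 → ℝ, IsModel M → ∀ j ∈ Finset.Icc 1 J, ∀ j' ∈ Finset.Icc 1 J,
        MemNbhdModelSet N n k j M → MemNbhdModelSet N n k j' M → j = j') ∧
    sSup {v : EReal | ∃ j ∈ Finset.Icc 1 J, ∃ M : 𝔐 → ℝ, IsModel M ∧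
        MemNbhdModelSet N n k j M ∧ D M Mt ≤ r ∧
        v = (((∑ m ∈ N j, w m * ℓ m * M m) / (∑ m ∈ N j, w m * M m) : ℝ) : EReal)} =
    ⨆ j ∈ Finset.Icc 1 J,
      sSup {v : EReal | ∃ s : ℝ, 0 < s ∧ ∃ P : 𝔐 → ℝ, (∀ m, 0 ≤ P m) ∧
        (∑ m ∈ N j, w m * P m) = 1 ∧ (∑ m, P m) = s ∧
        s * (k : ℝ) / n ≤ ∑ m ∈ N j, P m ∧
        (∑ m ∈ N (j - 1), P m) ≤ s * ((k : ℝ) - 1) / n ∧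
        s * D (fun m => P m / s) Mt ≤ s * r ∧
        v = ((∑ m ∈ N j, w m * ℓ m * P m : ℝ) : EReal)} := by
  have hn1 : 1 ≤ n := le_trans hk hkn
  have hn : (0:ℝ) < n := by exact_mod_cast hn1
  have hkpos : (0:ℝ) < (k:ℝ)/n := div_pos (by exact_mod_cast hk) hn
  -- chain monotonicity
  have hchain : ∀ b : ℕ, b ≤ J → ∀ a : ℕ, a ≤ b → N a ⊆ N b := by
    intro b
    induction b with
    | zero =>
      intro _ a ha
      have : a = 0 := Nat.le_zero.mp ha
      rw [this]
    | succ b ih =>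
      intro hbJ a ha
      rcases Nat.lt_succ_iff_lt_or_eq.mp (Nat.lt_succ_of_le ha) with h | h
      · exact (ih (by omega) a (by omega)).trans (hNmono b (by omega))
      · rw [h]
  have huniq : ∀ M : 𝔐 → ℝ, IsModel M → ∀ j ∈ Finset.Icc 1 J, ∀ j' ∈ Finset.Icc 1 J,
      MemNbhdModelSet N n k j M → MemNbhdModelSet N n k j' M → j = j' := by
    intro M hM j hj j' hj' h1 h2
    simp only [Finset.mem_Icc] at hj hj'
    have key : ∀ a b : ℕ, 1 ≤ a → a ≤ J → 1 ≤ b → b ≤ J → a < b →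
        MemNbhdModelSet N n k a M → MemNbhdModelSet N n k b M → False := by
      intro a b ha1 haJ hb1 hbJ hab hA hB
      have hsub : N a ⊆ N (b - 1) := hchain (b - 1) (by omega) a (by omega)
      have hmono : ∑ m ∈ N a, M m ≤ ∑ m ∈ N (b - 1), M m :=
        Finset.sum_le_sum_of_subset_of_nonneg hsub (fun m _ _ => hM.1 m)
      have hlt : ((k:ℝ) - 1)/n < (k:ℝ)/n := by gcongr; linarith
      have := hA.1
      have := hB.2
      linarith
    by_contra hne
    rcases lt_or_gt_of_ne hne with h | h
    · exact key j j' hj.1 hj.2 hj'.1 hj'.2 h h1 h2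
    · exact key j' j hj'.1 hj'.2 hj.1 hj.2 h h2 h1
  refine ⟨huniq, ?_⟩
  have hsetEq : {v : EReal | ∃ j ∈ Finset.Icc 1 J, ∃ M : 𝔐 → ℝ, IsModel M ∧
        MemNbhdModelSet N n k j M ∧ D M Mt ≤ r ∧
        v = (((∑ m ∈ N j, w m * ℓ m * M m) / (∑ m ∈ N j, w m * M m) : ℝ) : EReal)} =
      ⋃ j ∈ Finset.Icc 1 J,
      {v : EReal | ∃ s : ℝ, 0 < s ∧ ∃ P : 𝔐 → ℝ, (∀ m, 0 ≤ P m) ∧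
        (∑ m ∈ N j, w m * P m) = 1 ∧ (∑ m, P m) = s ∧
        s * (k : ℝ) / n ≤ ∑ m ∈ N j, P m ∧
        (∑ m ∈ N (j - 1), P m) ≤ s * ((k : ℝ) - 1) / n ∧
        s * D (fun m => P m / s) Mt ≤ s * r ∧
        v = ((∑ m ∈ N j, w m * ℓ m * P m : ℝ) : EReal)} := by
    ext v
    simp only [Set.mem_setOf_eq, Set.mem_iUnion, exists_prop]
    constructor
    · rintro ⟨j, hj, M, hM, hmem, hDr, hv⟩
      refine ⟨j, hj, ?_⟩
      have hsumM : (k:ℝ)/n ≤ ∑ m ∈ N j, M m := hmem.1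
      have hposM : 0 < ∑ m ∈ N j, M m := lt_of_lt_of_le hkpos hsumM
      have hT : 0 < ∑ m ∈ N j, w m * M m := by
        obtain ⟨m0, hm0, hm0pos⟩ : ∃ m ∈ N j, 0 < M m := by
          by_contra h
          push_neg at h
          have : ∑ m ∈ N j, M m ≤ 0 :=
            Finset.sum_nonpos (fun m hm => h m hm)
          linarith
        have h1 : 0 < w m0 * M m0 := mul_pos (hw m0) hm0pos
        have h2 : w m0 * M m0 ≤ ∑ m ∈ N j, w m * M m :=
          Finset.single_le_sum (fun m _ => mul_nonneg (hw m).le (hM.1 m)) hm0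
        linarith
      set T := ∑ m ∈ N j, w m * M m with hTdef
      refine ⟨1/T, by positivity, fun m => M m / T,
        fun m => div_nonneg (hM.1 m) hT.le, ?_, ?_, ?_, ?_, ?_, ?_⟩
      · calc ∑ m ∈ N j, w m * (M m / T) = ∑ m ∈ N j, (w m * M m) / T := by
              simp [mul_div_assoc]
          _ = T / T := by rw [← Finset.sum_div]
          _ = 1 := div_self hT.ne'
      · rw [← Finset.sum_div, hM.2]
      · rw [← Finset.sum_div]
        have e : 1/T * (k:ℝ)/n = ((k:ℝ)/n)/T := by ring
        rw [e]
        gcongr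
      · rw [← Finset.sum_div]
        have e : 1/T * ((k:ℝ) - 1)/n = (((k:ℝ) - 1)/n)/T := by ring
        rw [e]
        gcongr
        exact hmem.2
      · have hMeq : (fun m => (M m / T) / (1/T)) = M := by
          funext m
          field_simp
        rw [hMeq]
        exact mul_le_mul_of_nonneg_left hDr (by positivity)
      · rw [hv]
        norm_cast
        calc (∑ m ∈ N j, w m * ℓ m * M m) / T
            = ∑ m ∈ N j, (w m * ℓ m * M m) / T := by rw [← Finset.sum_div]
          _ = ∑ m ∈ N j, w m * ℓ m * (M m / T) := by simp [mul_div_assoc]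
    · rintro ⟨j, hj, s, hs, P, hP, hw1, hsum, hlow, hupp, hdist, hv⟩
      refine ⟨j, hj, fun m => P m / s,
        ⟨fun m => div_nonneg (hP m) hs.le, by rw [← Finset.sum_div, hsum]; exact div_self hs.ne'⟩,
        ⟨?_, ?_⟩, ?_, ?_⟩
      · rw [← Finset.sum_div, le_div_iff₀ hs]
        have e : (k:ℝ)/n * s = s * (k:ℝ)/n := by ring
        linarith
      · rw [← Finset.sum_div, div_le_iff₀ hs]
        have e : ((k:ℝ) - 1)/n * s = s * ((k:ℝ) - 1)/n := by ring
        linarith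
      · exact le_of_mul_le_mul_left hdist hs
      · rw [hv]
        norm_cast
        have h1 : ∑ m ∈ N j, w m * (P m / s) = 1/s := by
          calc ∑ m ∈ N j, w m * (P m / s) = ∑ m ∈ N j, (w m * P m) / s := by
                simp [mul_div_assoc]
            _ = (∑ m ∈ N j, w m * P m) / s := by rw [← Finset.sum_div]
            _ = 1/s := by rw [hw1]
        have h2 : ∑ m ∈ N j, w m * ℓ m * (P m / s) = (∑ m ∈ N j, w m * ℓ m * P m) / s := by
          rw [Finset.sum_div]
          exact Finset.sum_congr rfl fun m _ => (mul_div_assoc _ _ _).symm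
        rw [h1, h2]
        field_simp
  rw [hsetEq]
  simp only [Set.biUnion_eq_iUnion, sSup_iUnion]
end

section
/- Let α be a finite set, let Q : α → [0,∞) be a probability vector (Σ_a Q(a) = 1), and let X_1, …, X_n be i.i.d. random elements of α with distribution Q. Let P̂_n denote the empirical distribution, P̂_n(a) = |{i ∈ {1,…,n} : X_i = a}|/n. Then for every convex set C of probability vectors on α and every n ≥ 1, Prob(P̂_n ∈ C) ≤ exp(−n · inf_{P ∈ C} KL(P‖Q)), where the infimum over an empty set is +∞ and exp(−∞) = 0. -/
open Finset MeasureTheory ProbabilityTheory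
open scoped ENNReal NNReal

/-- A probability vector on a finite set. -/
def IsProbVec {α : Type*} [Fintype α] (P : α → ℝ) : Prop :=
  (∀ a, 0 ≤ P a) ∧ ∑ a, P a = 1

open Classical

/-- The relative entropy `KL(P‖Q) ∈ [0,∞]` between probability vectors on a
finite set, with the conventions `0·log 0 = 0` and `KL(P‖Q) = ∞` whenever
`P` is not absolutely continuous with respect to `Q`. -/
noncomputable def klDiv {α : Type*} [Fintype α] (P Q : α → ℝ) : ℝ≥0∞ :=
  if ∀ a, Q a = 0 → P a = 0 then
    ENNReal.ofReal (∑ a, if P a = 0 then 0 else P a * Real.log (P a / Q a))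
  else ⊤

/-- `exp(−x)` for `x ∈ [0,∞]`, with `exp(−∞) = 0`. -/
noncomputable def expNeg (x : ℝ≥0∞) : ℝ≥0∞ :=
  if x = ⊤ then 0 else ENNReal.ofReal (Real.exp (-x.toReal))

namespace SanovAux

variable {α : Type*} [Fintype α]

open Classical in
/-- The real-valued KL sum, matching the inner sum of `klDiv`. -/
noncomputable def Dr (P R : α → ℝ) : ℝ :=
  ∑ a, if P a = 0 then 0 else P a * Real.log (P a / R a)

lemma sub_one_le_mul_log {x : ℝ} (hx : 0 ≤ x) : x - 1 ≤ x * Real.log x := by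
  rcases hx.eq_or_lt with h | h
  · simp [← h]
  · have h1 : Real.log x⁻¹ ≤ x⁻¹ - 1 := Real.log_le_sub_one_of_pos (inv_pos.2 h)
    rw [Real.log_inv] at h1
    have h2 : x * (-Real.log x) ≤ x * (x⁻¹ - 1) := mul_le_mul_of_nonneg_left h1 hx
    have h3 : x * x⁻¹ = 1 := mul_inv_cancel₀ h.ne'
    nlinarith

lemma neg_one_le_mul_log {x : ℝ} (hx : 0 ≤ x) : -1 ≤ x * Real.log x :=
  le_trans (by linarith) (sub_one_le_mul_log hx)

open Classical in
lemma if_log_eq {z w : ℝ} (hw : z ≠ 0 → 0 < w) :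
    (if z = 0 then (0:ℝ) else z * Real.log (z / w)) = z * Real.log z - z * Real.log w := by
  by_cases h : z = 0
  · simp [h]
  · rw [if_neg h, Real.log_div h (hw h).ne', mul_sub]

open Classical in
lemma Dr_nonneg {P R : α → ℝ} (hP0 : ∀ a, 0 ≤ P a) (hPsum : ∑ a, P a = 1)
    (hR0 : ∀ a, 0 ≤ R a) (hRsum : ∑ a, R a ≤ 1)
    (habs : ∀ a, P a ≠ 0 → R a ≠ 0) : 0 ≤ Dr P R := by
  have key : ∀ a ∈ Finset.univ,
      (P a - if P a = 0 then 0 else R a) ≤ (if P a = 0 then 0 else P a * Real.log (P a / R a)) := by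
    intro a _
    by_cases h : P a = 0
    · simp [h]
    · have hp : 0 < P a := (hP0 a).lt_of_ne (Ne.symm h)
      have hr : 0 < R a := (hR0 a).lt_of_ne (Ne.symm (habs a h))
      simp only [if_neg h]
      have hlog : Real.log (R a / P a) ≤ R a / P a - 1 :=
        Real.log_le_sub_one_of_pos (by positivity)
      have hrw : Real.log (P a / R a) = - Real.log (R a / P a) := by
        rw [← Real.log_inv]; congr 1; field_simp
      rw [hrw]
      have h2 : P a * Real.log (R a / P a) ≤ P a * (R a / P a - 1) :=
        mul_le_mul_of_nonneg_left hlog hp.le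
      have h3 : P a * (R a / P a) = R a := by field_simp
      nlinarith
  have h4 : 0 ≤ ∑ a, (P a - if P a = 0 then 0 else R a) := by
    rw [Finset.sum_sub_distrib, hPsum]
    have : ∑ a, (if P a = 0 then 0 else R a) ≤ ∑ a, R a :=
      Finset.sum_le_sum fun a _ => by by_cases h : P a = 0 <;> simp [h, hR0 a]
    linarith
  exact le_trans h4 (Finset.sum_le_sum key)

open Classical in
/-- The compensation identity for relative entropy. -/
lemma comp_identity {Q P Ps : α → ℝ} (hQ0 : ∀ a, 0 ≤ Q a)
    (hP0 : ∀ a, 0 ≤ P a) (hPs0 : ∀ a, 0 ≤ Ps a)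
    (hPQ : ∀ a, Q a = 0 → P a = 0) (hPsQ : ∀ a, Q a = 0 → Ps a = 0)
    {θ : ℝ} (hθ0 : 0 < θ) (hθ1 : θ < 1) :
    Dr (fun a => (1 - θ) * Ps a + θ * P a) Q
      + (1 - θ) * Dr Ps (fun a => (1 - θ) * Ps a + θ * P a)
      + θ * Dr P (fun a => (1 - θ) * Ps a + θ * P a)
      = (1 - θ) * Dr Ps Q + θ * Dr P Q := by
  unfold Dr
  rw [Finset.mul_sum, Finset.mul_sum, Finset.mul_sum, Finset.mul_sum,
    ← Finset.sum_add_distrib, ← Finset.sum_add_distrib, ← Finset.sum_add_distrib]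
  apply Finset.sum_congr rfl
  intro a _
  by_cases hq0 : Q a = 0
  · simp [hPsQ a hq0, hPQ a hq0]
  · have hqpos : 0 < Q a := (hQ0 a).lt_of_ne (Ne.symm hq0)
    have hx0 : 0 ≤ Ps a := hPs0 a
    have hy0 : 0 ≤ P a := hP0 a
    by_cases hr0 : (1 - θ) * Ps a + θ * P a = 0
    · have hx : Ps a = 0 := by nlinarith
      have hy : P a = 0 := by nlinarith
      simp [hx, hy, hr0]
    · have hrpos : 0 < (1 - θ) * Ps a + θ * P a := by
        rcases lt_or_eq_of_le (by nlinarith : (0:ℝ) ≤ (1 - θ) * Ps a + θ * P a) with h | h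
        · exact h
        · exact absurd h.symm hr0
      have e1 := if_log_eq (z := (1 - θ) * Ps a + θ * P a) (w := Q a) (fun _ => hqpos)
      have e2 := if_log_eq (z := Ps a) (w := (1 - θ) * Ps a + θ * P a) (fun _ => hrpos)
      have e3 := if_log_eq (z := P a) (w := (1 - θ) * Ps a + θ * P a) (fun _ => hrpos)
      have e4 := if_log_eq (z := Ps a) (w := Q a) (fun _ => hqpos)
      have e5 := if_log_eq (z := P a) (w := Q a) (fun _ => hqpos)
      rw [e1, e2, e3, e4, e5]
      ring


open Classical in
lemma csiszar {Q : α → ℝ} (hQ0 : ∀ a, 0 ≤ Q a)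
    {K : Set (α → ℝ)} (hK : Convex ℝ K)
    (hKsub : ∀ P ∈ K, (∀ a, 0 ≤ P a) ∧ (∑ a, P a = 1) ∧ (∀ a, Q a = 0 → P a = 0))
    {Ps : α → ℝ} (hPsK : Ps ∈ K) (hmin : ∀ R ∈ K, Dr Ps Q ≤ Dr R Q)
    {P : α → ℝ} (hP : P ∈ K) :
    (∀ a, Ps a = 0 → P a = 0) ∧
      Dr Ps Q ≤ ∑ a, if P a = 0 then 0 else P a * Real.log (Ps a / Q a) := by
  obtain ⟨hP0, hPsum, hPQ⟩ := hKsub P hP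
  obtain ⟨hPs0, hPssum, hPsQ⟩ := hKsub Ps hPsK
  set m := Dr Ps Q with hm
  have hB0 : m ≤ Dr P Q := hmin P hP
  have hRmem : ∀ θ : ℝ, θ ∈ Set.Ioo (0:ℝ) 1 →
      (fun a => (1-θ) * Ps a + θ * P a) ∈ K := by
    intro θ hθ
    have h := hK hPsK hP (by linarith [hθ.2] : (0:ℝ) ≤ 1 - θ) hθ.1.le (by ring)
    have he : ((1-θ) • Ps + θ • P) = (fun a => (1-θ) * Ps a + θ * P a) := by
      funext a; simp [smul_eq_mul]
    rwa [he] at h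
  have hR0 : ∀ θ : ℝ, θ ∈ Set.Ioo (0:ℝ) 1 → ∀ a, 0 ≤ (1-θ) * Ps a + θ * P a := by
    intro θ hθ a; nlinarith [hPs0 a, hP0 a, hθ.1, hθ.2]
  have hRsum : ∀ θ : ℝ, (∑ a, ((1-θ) * Ps a + θ * P a)) = 1 := by
    intro θ
    rw [Finset.sum_add_distrib, ← Finset.mul_sum, ← Finset.mul_sum, hPssum, hPsum]
    ring
  have step1 : ∀ θ : ℝ, θ ∈ Set.Ioo (0:ℝ) 1 →
      Dr P (fun a => (1-θ) * Ps a + θ * P a) ≤ Dr P Q - m := by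
    intro θ hθ
    have hid := comp_identity (Q := Q) (P := P) (Ps := Ps) hQ0 hP0 hPs0 hPQ hPsQ hθ.1 hθ.2
    have h1 : m ≤ Dr (fun a => (1-θ) * Ps a + θ * P a) Q := hmin _ (hRmem θ hθ)
    have h2 : 0 ≤ Dr Ps (fun a => (1-θ) * Ps a + θ * P a) := by
      apply Dr_nonneg hPs0 hPssum (hR0 θ hθ) (le_of_eq (hRsum θ))
      intro a ha
      have hpa : 0 < Ps a := (hPs0 a).lt_of_ne (Ne.symm ha)
      have : 0 < (1-θ) * Ps a + θ * P a := by nlinarith [hP0 a, hθ.1, hθ.2]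
      exact this.ne'
    nlinarith [hθ.1, hθ.2, mul_nonneg (by linarith [hθ.2] : (0:ℝ) ≤ 1 - θ) h2]
  have hac : ∀ a, Ps a = 0 → P a = 0 := by
    intro b hb
    by_contra hbne
    have hpb : 0 < P b := (hP0 b).lt_of_ne (Ne.symm hbne)
    have hBnn : (0:ℝ) ≤ Dr P Q - m := by linarith
    obtain ⟨c, hc, hcpos⟩ : ∃ c : ℝ, c = (Dr P Q - m + Fintype.card α) / P b + 1 ∧ 0 < c :=
      ⟨_, rfl, by positivity⟩
    obtain ⟨θ, hθdef⟩ : ∃ θ : ℝ, θ = Real.exp (-c) := ⟨_, rfl⟩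
    have hθ0 : 0 < θ := hθdef ▸ Real.exp_pos _
    have hθ1 : θ < 1 := by rw [hθdef, Real.exp_lt_one_iff]; linarith
    have h1 := step1 θ ⟨hθ0, hθ1⟩
    obtain ⟨R, hRdef⟩ : ∃ R : α → ℝ, R = fun a => (1-θ) * Ps a + θ * P a := ⟨_, rfl⟩
    rw [← hRdef] at h1
    have hRa : ∀ a, R a = (1-θ) * Ps a + θ * P a := fun a => by rw [hRdef]
    have hsplit : (if P b = 0 then (0:ℝ) else P b * Real.log (P b / R b))
        + ∑ a ∈ Finset.univ.erase b, (if P a = 0 then (0:ℝ) else P a * Real.log (P a / R a))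
        = Dr P R :=
      Finset.add_sum_erase _ (fun a => if P a = 0 then (0:ℝ) else P a * Real.log (P a / R a))
        (Finset.mem_univ b)
    have hRb : R b = θ * P b := by rw [hRa b, hb]; ring
    have htermb : (if P b = 0 then (0:ℝ) else P b * Real.log (P b / R b)) = P b * c := by
      rw [if_neg hbne, hRb]
      have hne : P b / (θ * P b) = θ⁻¹ := by
        rw [mul_comm, div_mul_eq_div_div, div_self hpb.ne', one_div]
      rw [hne, Real.log_inv, hθdef, Real.log_exp]; ring
    have hrest : ∀ a ∈ Finset.univ.erase b,
        (-1 : ℝ) ≤ (if P a = 0 then (0:ℝ) else P a * Real.log (P a / R a)) := by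
      intro a _
      by_cases h : P a = 0
      · simp [h]
      · rw [if_neg h]
        have hpa : 0 < P a := (hP0 a).lt_of_ne (Ne.symm h)
        have hra : 0 < R a := by rw [hRa a]; nlinarith [hPs0 a]
        have hRa1 : R a ≤ 1 := by
          have h1 : R a ≤ ∑ a', R a' := by
            rw [hRdef]
            exact Finset.single_le_sum (fun a' _ => hR0 θ ⟨hθ0, hθ1⟩ a') (Finset.mem_univ a)
          have h2 : ∑ a', R a' = 1 := by rw [hRdef]; exact hRsum θ
          linarith
        have hlogR : Real.log (R a) ≤ 0 := Real.log_nonpos hra.le hRa1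
        rw [Real.log_div h hra.ne']
        nlinarith [neg_one_le_mul_log (hP0 a), mul_nonneg hpa.le (neg_nonneg.mpr hlogR)]
    have hsum_rest : -(Fintype.card α : ℝ)
        ≤ ∑ a ∈ Finset.univ.erase b, (if P a = 0 then (0:ℝ) else P a * Real.log (P a / R a)) := by
      calc -(Fintype.card α : ℝ) ≤ -((Finset.univ.erase b).card : ℝ) := by
            have hcard := Finset.card_le_univ (Finset.univ.erase b)
            have h3 : ((Finset.univ.erase b).card : ℝ) ≤ (Fintype.card α : ℝ) := by
              exact_mod_cast hcard
            linarith
      _ = ∑ _a ∈ Finset.univ.erase b, (-1 : ℝ) := by simp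
      _ ≤ _ := Finset.sum_le_sum hrest
    have hPbc : P b * c = (Dr P Q - m + Fintype.card α) + P b := by
      rw [hc, mul_add, mul_one, mul_div_cancel₀ _ hpb.ne']
    rw [htermb] at hsplit
    linarith [hsplit, hsum_rest, h1, hPbc, hpb]
  refine ⟨hac, ?_⟩
  set G : ℝ → ℝ := fun θ =>
    ∑ a, if P a = 0 then (0:ℝ) else P a * (Real.log ((1-θ) * Ps a + θ * P a) - Real.log (Q a))
    with hG
  have hGm : ∀ θ : ℝ, θ ∈ Set.Ioo (0:ℝ) 1 → m ≤ G θ := by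
    intro θ hθ
    have h1 := step1 θ hθ
    have heq : G θ = Dr P Q - Dr P (fun a => (1-θ) * Ps a + θ * P a) := by
      rw [hG]
      unfold Dr
      rw [← Finset.sum_sub_distrib]
      apply Finset.sum_congr rfl
      intro a _
      by_cases h : P a = 0
      · simp [h]
      · have hqa : 0 < Q a := (hQ0 a).lt_of_ne (Ne.symm (fun h0 => h (hPQ a h0)))
        have hpa : 0 < P a := (hP0 a).lt_of_ne (Ne.symm h)
        have hra : 0 < (1-θ) * Ps a + θ * P a := by nlinarith [hPs0 a, hθ.1, hθ.2]
        rw [if_neg h, if_neg h, if_neg h, Real.log_div h hqa.ne', Real.log_div h hra.ne']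
        ring
    linarith
  have hG0 : G 0 = ∑ a, if P a = 0 then (0:ℝ) else P a * Real.log (Ps a / Q a) := by
    rw [hG]
    apply Finset.sum_congr rfl
    intro a _
    by_cases h : P a = 0
    · simp [h]
    · have hpsa : Ps a ≠ 0 := fun h0 => h (hac a h0)
      have hqa : Q a ≠ 0 := fun h0 => h (hPQ a h0)
      rw [if_neg h, if_neg h, Real.log_div hpsa hqa]
      norm_num
  have hcont : Filter.Tendsto G (nhdsWithin 0 (Set.Ioi (0:ℝ))) (nhds (G 0)) := by
    have htd : Filter.Tendsto G (nhds (0:ℝ)) (nhds (G 0)) := by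
      rw [hG]
      apply tendsto_finset_sum
      intro a _
      by_cases h : P a = 0
      · simp only [if_pos h]
        exact tendsto_const_nhds
      · simp only [if_neg h]
        have hpsa : 0 < Ps a := (hPs0 a).lt_of_ne (Ne.symm (fun h0 => h (hac a h0)))
        have hlin : Continuous (fun θ : ℝ => (1-θ) * Ps a + θ * P a) :=
          ((continuous_const.sub continuous_id).mul continuous_const).add
            (continuous_id.mul continuous_const)
        have hval : (1-(0:ℝ)) * Ps a + 0 * P a ≠ 0 := by simpa using hpsa.ne'
        have h2 : ContinuousAt (fun θ : ℝ => Real.log ((1-θ) * Ps a + θ * P a)) 0 :=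
          hlin.continuousAt.log hval
        exact (continuousAt_const.mul (h2.sub continuousAt_const)).tendsto
    exact htd.mono_left nhdsWithin_le_nhds
  rw [← hG0]
  refine ge_of_tendsto hcont ?_
  filter_upwards [Ioo_mem_nhdsGT_of_mem (Set.left_mem_Ico.mpr one_pos)] with θ hθ
  exact hGm θ hθ


lemma lintegral_prod_indep {Ω : Type*} [MeasurableSpace Ω] {μ : MeasureTheory.Measure Ω}
    [MeasureTheory.IsProbabilityMeasure μ] {n : ℕ} {F : Fin n → Ω → ℝ≥0∞} (hmeas : ∀ i, Measurable (F i))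
    (hindep : iIndepFun F μ) (s : Finset (Fin n)) :
    ∫⁻ ω, ∏ i ∈ s, F i ω ∂μ = ∏ i ∈ s, ∫⁻ ω, F i ω ∂μ := by
  induction s using Finset.induction with
  | empty => simp
  | @insert i s hi ih =>
    simp only [Finset.prod_insert hi]
    rw [← ih]
    have hind : IndepFun (∏ j ∈ s, F j) (F i) μ :=
      hindep.indepFun_finsetProd_of_notMem hmeas hi
    have hmeas_prod : Measurable (∏ j ∈ s, F j) := by
      have h2 := Finset.measurable_prod s (fun j _ => hmeas j)
      rwa [show (fun a => ∏ i ∈ s, F i a) = ∏ j ∈ s, F j from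
        funext fun a => (Finset.prod_apply a s F).symm] at h2
    have hmul := lintegral_mul_eq_lintegral_mul_lintegral_of_indepFun hmeas_prod (hmeas i) hind
    have heq : ∀ ω, F i ω * ∏ j ∈ s, F j ω = ((∏ j ∈ s, F j) * F i) ω := fun ω => by
      simp only [Pi.mul_apply, Finset.prod_apply]
      exact mul_comm _ _
    calc ∫⁻ ω, F i ω * ∏ j ∈ s, F j ω ∂μ
        = ∫⁻ ω, ((∏ j ∈ s, F j) * F i) ω ∂μ := by simp only [heq]
      _ = (∫⁻ ω, (∏ j ∈ s, F j) ω ∂μ) * ∫⁻ ω, F i ω ∂μ := hmul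
      _ = (∫⁻ ω, F i ω ∂μ) * ∫⁻ ω, ∏ j ∈ s, F j ω ∂μ := by
          simp only [Finset.prod_apply]
          exact mul_comm _ _

lemma lintegral_comp_fintype {α : Type*} [Fintype α] [MeasurableSpace α]
    [MeasurableSingletonClass α] {Ω : Type*} [MeasurableSpace Ω]
    (μ : MeasureTheory.Measure Ω) (g : α → ℝ≥0∞) (X : Ω → α) (hX : Measurable X) :
    ∫⁻ ω, g (X ω) ∂μ = ∑ a, g a * μ (X ⁻¹' {a}) := by
  rw [← MeasureTheory.lintegral_map (measurable_of_countable g) hX,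
    MeasureTheory.lintegral_fintype]
  exact Finset.sum_congr rfl fun a _ => by
    rw [MeasureTheory.Measure.map_apply hX (measurableSet_singleton a)]

end SanovAux

open SanovAux

set_option maxHeartbeats 1000000 in
/-- **the bootstrap inequality, Sanov-type bound.** For i.i.d.
samples from `Q`, the probability that the empirical distribution lies in a
convex set `C` of probability vectors is at most
`exp(−n · inf_{P ∈ C} KL(P‖Q))`. -/
theorem empirical_measure_convex_set_bound
    {α : Type*} [Fintype α] [Nonempty α]
    [MeasurableSpace α] [MeasurableSingletonClass α]
    (Q : α → ℝ) (hQ : IsProbVec Q)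
    {Ω : Type*} [MeasurableSpace Ω] (μ : Measure Ω) [IsProbabilityMeasure μ]
    (n : ℕ) (hn : 1 ≤ n)
    (X : Fin n → Ω → α) (hXmeas : ∀ i, Measurable (X i))
    (hXindep : iIndepFun X μ)
    (hXdist : ∀ i a, μ (X i ⁻¹' {a}) = ENNReal.ofReal (Q a))
    (C : Set (α → ℝ)) (hCsub : C ⊆ {P | IsProbVec P}) (hC : Convex ℝ C) :
    μ {ω | (fun a => ((Finset.univ.filter fun i => X i ω = a).card : ℝ) / n) ∈ C}
      ≤ expNeg ((n : ℝ≥0∞) * ⨅ P ∈ C, klDiv P Q) := by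
  obtain ⟨hQ0, hQsum⟩ := hQ
  have hn0 : (0:ℝ) < n := by exact_mod_cast hn
  set emp : Ω → α → ℝ := fun ω a => ((Finset.univ.filter fun i => X i ω = a).card : ℝ) / n
    with hemp
  have hEeq : {ω | (fun a => ((Finset.univ.filter fun i => X i ω = a).card : ℝ) / n) ∈ C}
      = {ω | emp ω ∈ C} := rfl
  rw [hEeq]
  set C₀ : Set (α → ℝ) := C ∩ {P | ∀ a, Q a = 0 → P a = 0} with hC₀def
  set E₀ : Set Ω := {ω | emp ω ∈ C₀} with hE₀def
  -- null set control
  have hNull : μ {ω | ∃ i, Q (X i ω) = 0} = 0 := by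
    have hsub : {ω | ∃ i, Q (X i ω) = 0} = ⋃ i, ⋃ a ∈ {a : α | Q a = 0}, X i ⁻¹' {a} := by
      ext ω
      simp only [Set.mem_setOf_eq, Set.mem_iUnion, Set.mem_preimage, Set.mem_singleton_iff]
      constructor
      · rintro ⟨i, hi⟩; exact ⟨i, X i ω, hi, rfl⟩
      · rintro ⟨i, a, ha, hXa⟩; exact ⟨i, by rw [hXa]; exact ha⟩
    rw [hsub]
    apply MeasureTheory.measure_iUnion_null
    intro i
    rw [MeasureTheory.measure_biUnion_null_iff (Set.to_countable _)]
    intro a ha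
    rw [hXdist i a, Set.mem_setOf_eq.mp ha, ENNReal.ofReal_zero]
  have hEsub : {ω | emp ω ∈ C} ⊆ E₀ ∪ {ω | ∃ i, Q (X i ω) = 0} := by
    intro ω hω
    by_cases h : ∃ i, Q (X i ω) = 0
    · exact Or.inr h
    · push_neg at h
      left
      refine ⟨hω, fun a ha => ?_⟩
      have hfe : (Finset.univ.filter fun i => X i ω = a) = ∅ := by
        rw [Finset.filter_eq_empty_iff]
        intro i _ hXi
        exact h i (by rw [hXi]; exact ha)
      show ((Finset.univ.filter fun i => X i ω = a).card : ℝ) / n = 0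
      rw [hfe]
      simp
  have hmuE : μ {ω | emp ω ∈ C} ≤ μ E₀ := by
    calc μ {ω | emp ω ∈ C} ≤ μ (E₀ ∪ {ω | ∃ i, Q (X i ω) = 0}) := measure_mono hEsub
      _ ≤ μ E₀ + μ {ω | ∃ i, Q (X i ω) = 0} := measure_union_le _ _
      _ = μ E₀ := by rw [hNull, add_zero]
  by_cases hC₀ne : C₀.Nonempty
  case neg =>
    have hE₀empty : E₀ = ∅ := by
      rw [Set.eq_empty_iff_forall_notMem]
      intro ω hω
      exact hC₀ne ⟨emp ω, hω⟩
    refine le_trans hmuE ?_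
    rw [hE₀empty, measure_empty]
    exact zero_le
  case pos =>
  -- structural facts about C₀ and its closure
  have hC₀sub : C₀ ⊆ {P : α → ℝ | (∀ a, 0 ≤ P a) ∧ (∑ a, P a = 1) ∧ (∀ a, Q a = 0 → P a = 0)} := by
    intro P hP
    exact ⟨(hCsub hP.1).1, (hCsub hP.1).2, hP.2⟩
  have hΔclosed : IsClosed {P : α → ℝ | (∀ a, 0 ≤ P a) ∧ (∑ a, P a = 1) ∧ (∀ a, Q a = 0 → P a = 0)} := by
    have h1 : IsClosed {P : α → ℝ | ∀ a, 0 ≤ P a} := by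
      have he : {P : α → ℝ | ∀ a, 0 ≤ P a} = ⋂ a, {P | 0 ≤ P a} := by
        ext P; simp [Set.mem_iInter]
      rw [he]
      exact isClosed_iInter fun a => isClosed_le continuous_const (continuous_apply a)
    have h2 : IsClosed {P : α → ℝ | ∑ a, P a = 1} :=
      isClosed_eq (continuous_finset_sum _ fun a _ => continuous_apply a) continuous_const
    have h3 : IsClosed {P : α → ℝ | ∀ a, Q a = 0 → P a = 0} := by
      have he : {P : α → ℝ | ∀ a, Q a = 0 → P a = 0} = ⋂ a, {P | Q a = 0 → P a = 0} := by
        ext P; simp [Set.mem_iInter]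
      rw [he]
      refine isClosed_iInter fun a => ?_
      by_cases hq : Q a = 0
      · have he2 : {P : α → ℝ | Q a = 0 → P a = 0} = {P | P a = 0} := by ext P; simp [hq]
        rw [he2]
        exact isClosed_eq (continuous_apply a) continuous_const
      · have he2 : {P : α → ℝ | Q a = 0 → P a = 0} = Set.univ := by ext P; simp [hq]
        rw [he2]
        exact isClosed_univ
    have he : {P : α → ℝ | (∀ a, 0 ≤ P a) ∧ (∑ a, P a = 1) ∧ (∀ a, Q a = 0 → P a = 0)}
        = {P : α → ℝ | ∀ a, 0 ≤ P a} ∩ ({P | ∑ a, P a = 1} ∩ {P | ∀ a, Q a = 0 → P a = 0}) := by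
      ext P; simp [Set.mem_inter_iff, and_assoc]
    rw [he]
    exact h1.inter (h2.inter h3)
  have hIcc : IsCompact (Set.pi Set.univ fun _ : α => Set.Icc (0:ℝ) 1) :=
    isCompact_univ_pi fun _ => isCompact_Icc
  have hC₀bd : C₀ ⊆ Set.pi Set.univ fun _ : α => Set.Icc (0:ℝ) 1 := by
    intro P hP a _
    obtain ⟨h0, h1', _⟩ := hC₀sub hP
    refine ⟨h0 a, ?_⟩
    calc P a ≤ ∑ a', P a' := Finset.single_le_sum (fun a' _ => h0 a') (Finset.mem_univ a)
      _ = 1 := h1'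
  have hKcomp : IsCompact (closure C₀) :=
    hIcc.of_isClosed_subset isClosed_closure (closure_minimal hC₀bd hIcc.isClosed)
  have hKsub : closure C₀ ⊆ {P : α → ℝ | (∀ a, 0 ≤ P a) ∧ (∑ a, P a = 1) ∧ (∀ a, Q a = 0 → P a = 0)} :=
    closure_minimal hC₀sub hΔclosed
  have hC₀conv : Convex ℝ C₀ := by
    refine hC.inter ?_
    intro x hx y hy a b ha hb hab
    intro c hc
    simp only [Pi.add_apply, Pi.smul_apply, smul_eq_mul, hx c hc, hy c hc, mul_zero, add_zero]
  have hKconv : Convex ℝ (closure C₀) := hC₀conv.closure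
  have hKne : (closure C₀).Nonempty := hC₀ne.closure
  -- continuous version of the KL divergence
  set Fc : (α → ℝ) → ℝ :=
    fun P => ∑ a, if Q a = 0 then 0 else (P a * Real.log (P a) - P a * Real.log (Q a)) with hFcdef
  have hFccont : Continuous Fc := by
    apply continuous_finset_sum
    intro a _
    by_cases hq : Q a = 0
    · simp only [if_pos hq]
      exact continuous_const
    · simp only [if_neg hq]
      exact (Real.continuous_mul_log.comp (continuous_apply a)).sub
        ((continuous_apply a).mul continuous_const)
  have hFceq : ∀ P : α → ℝ, (∀ a, 0 ≤ P a) → (∀ a, Q a = 0 → P a = 0) → Fc P = Dr P Q := by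
    intro P h0 habs
    rw [hFcdef]
    show (∑ a, _) = Dr P Q
    rw [Dr]
    apply Finset.sum_congr rfl
    intro a _
    by_cases hq : Q a = 0
    · rw [if_pos hq, if_pos (habs a hq)]
    · rw [if_neg hq, if_log_eq (fun _ => (hQ0 a).lt_of_ne (Ne.symm hq))]
  -- the I-projection
  obtain ⟨Ps, hPsK, hPsmin⟩ := hKcomp.exists_isMinOn hKne hFccont.continuousOn
  obtain ⟨hPs0, hPssum, hPsabs⟩ := hKsub hPsK
  have hmin' : ∀ R ∈ closure C₀, Dr Ps Q ≤ Dr R Q := by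
    intro R hR
    obtain ⟨hR0, hRsum, hRabs⟩ := hKsub hR
    rw [← hFceq Ps hPs0 hPsabs, ← hFceq R hR0 hRabs]
    exact hPsmin hR
  set m := Dr Ps Q with hmdef
  have hm0 : 0 ≤ m := by
    apply Dr_nonneg hPs0 hPssum hQ0 (le_of_eq hQsum)
    intro a ha hq
    exact ha (hPsabs a hq)
  -- the tilting function
  set g : α → ℝ := fun a => if Q a = 0 then 0 else Ps a / Q a with hgdef
  have hg0 : ∀ a, 0 ≤ g a := by
    intro a
    rw [hgdef]
    dsimp only
    split
    · exact le_refl 0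
    · exact div_nonneg (hPs0 a) (hQ0 a)
  set h : α → ℝ≥0∞ := fun a => ENNReal.ofReal (g a) with hhdef
  have hS : ∑ a, ENNReal.ofReal (Q a) * h a = 1 := by
    have hterm : ∀ a, ENNReal.ofReal (Q a) * h a = ENNReal.ofReal (if Q a = 0 then 0 else Ps a) := by
      intro a
      rw [hhdef]
      dsimp only
      rw [← ENNReal.ofReal_mul (hQ0 a)]
      congr 1
      rw [hgdef]
      dsimp only
      by_cases hq : Q a = 0
      · simp [hq]
      · rw [if_neg hq, if_neg hq]
        field_simp
    rw [Finset.sum_congr rfl (fun a _ => hterm a),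
      ← ENNReal.ofReal_sum_of_nonneg (fun a _ => by split <;> [exact le_refl 0; exact hPs0 a])]
    have hsum : (∑ a, if Q a = 0 then 0 else Ps a) = 1 := by
      rw [Finset.sum_congr rfl (fun a _ => ?_), hPssum]
      by_cases hq : Q a = 0
      · rw [if_pos hq, hPsabs a hq]
      · rw [if_neg hq]
    rw [hsum, ENNReal.ofReal_one]
  have hFi : ∀ i, ∫⁻ ω, h (X i ω) ∂μ = 1 := by
    intro i
    rw [lintegral_comp_fintype μ h (X i) (hXmeas i)]
    rw [Finset.sum_congr rfl (fun a _ => by rw [hXdist i a, mul_comm])]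
    exact hS
  have hIndepF : iIndepFun (fun (i : Fin n) (ω : Ω) => h (X i ω)) μ :=
    hXindep.comp (fun _ => h) (fun _ => measurable_of_countable h)
  have hprod : ∫⁻ ω, ∏ i, h (X i ω) ∂μ = 1 := by
    rw [lintegral_prod_indep (F := fun (i : Fin n) (ω : Ω) => h (X i ω))
      (fun i => (measurable_of_countable h).comp (hXmeas i)) hIndepF Finset.univ]
    rw [Finset.prod_congr rfl (fun i _ => hFi i)]
    simp
  -- the pointwise Chernoff bound on E₀
  have hpoint : ∀ ω ∈ E₀, ENNReal.ofReal (Real.exp (n * m)) ≤ ∏ i, h (X i ω) := by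
    intro ω hω
    obtain ⟨hωC, hωΔ⟩ := hω
    have hempΔ : ∀ a, Q a = 0 → emp ω a = 0 := hωΔ
    have hempK : emp ω ∈ closure C₀ := subset_closure ⟨hωC, hωΔ⟩
    obtain ⟨hac, hA⟩ := csiszar hQ0 hKconv (fun P hP => hKsub hP) hPsK hmin' hempK
    -- positivity of the factors
    have hcntpos : ∀ a, (Finset.univ.filter fun i => X i ω = a).card ≠ 0 → 0 < g a := by
      intro a hc
      have hempa : emp ω a ≠ 0 := by
        show ((Finset.univ.filter fun i => X i ω = a).card : ℝ) / n ≠ 0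
        exact div_ne_zero (Nat.cast_ne_zero.mpr hc) hn0.ne'
      have hqa : Q a ≠ 0 := fun hq => hempa (hempΔ a hq)
      have hpsa : Ps a ≠ 0 := fun hp => hempa (hac a hp)
      rw [hgdef]
      dsimp only
      rw [if_neg hqa]
      exact div_pos ((hPs0 a).lt_of_ne (Ne.symm hpsa)) ((hQ0 a).lt_of_ne (Ne.symm hqa))
    have hfac : ∀ a : α, (0:ℝ) < g a ^ (Finset.univ.filter fun i => X i ω = a).card := by
      intro a
      by_cases hc : (Finset.univ.filter fun i => X i ω = a).card = 0
      · rw [hc, pow_zero]; exact one_pos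
      · exact pow_pos (hcntpos a hc) _
    have hprod_eq : ∏ i, g (X i ω)
        = ∏ a, g a ^ (Finset.univ.filter fun i => X i ω = a).card := by
      rw [← Finset.prod_fiberwise_of_maps_to (fun i _ => Finset.mem_univ (X i ω))
        (fun i => g (X i ω))]
      apply Finset.prod_congr rfl
      intro a _
      rw [Finset.prod_congr rfl (fun i hi => ?_), Finset.prod_const]
      rw [(Finset.mem_filter.mp hi).2]
    have key_real : Real.exp (n * m) ≤ ∏ i, g (X i ω) := by
      rw [hprod_eq]
      have hpos : (0:ℝ) < ∏ a, g a ^ (Finset.univ.filter fun i => X i ω = a).card :=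
        Finset.prod_pos fun a _ => hfac a
      rw [← Real.exp_log hpos, Real.exp_le_exp]
      rw [Real.log_prod (fun a _ => (hfac a).ne')]
      have hsumeq : ∑ a, Real.log (g a ^ (Finset.univ.filter fun i => X i ω = a).card)
          = (n:ℝ) * ∑ a, (if emp ω a = 0 then 0 else emp ω a * Real.log (Ps a / Q a)) := by
        rw [Finset.mul_sum]
        apply Finset.sum_congr rfl
        intro a _
        rw [Real.log_pow]
        by_cases hc : (Finset.univ.filter fun i => X i ω = a).card = 0
        · have hempa : emp ω a = 0 := by
            show ((Finset.univ.filter fun i => X i ω = a).card : ℝ) / n = 0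
            rw [hc]; simp
          rw [if_pos hempa, hc]
          simp
        · have hempa : emp ω a ≠ 0 := by
            show ((Finset.univ.filter fun i => X i ω = a).card : ℝ) / n ≠ 0
            exact div_ne_zero (Nat.cast_ne_zero.mpr hc) hn0.ne'
          have hqa : Q a ≠ 0 := fun hq => hempa (hempΔ a hq)
          rw [if_neg hempa]
          have hga : g a = Ps a / Q a := by rw [hgdef]; exact if_neg hqa
          rw [hga]
          have hempform : emp ω a = ((Finset.univ.filter fun i => X i ω = a).card : ℝ) / n := rfl
          rw [hempform]
          rw [← mul_assoc, mul_div_cancel₀ _ hn0.ne']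
      rw [hsumeq]
      calc (n:ℝ) * m ≤ (n:ℝ) * ∑ a, (if emp ω a = 0 then 0 else emp ω a * Real.log (Ps a / Q a)) :=
            mul_le_mul_of_nonneg_left hA (by positivity)
        _ = _ := rfl
    have hofreal : ∏ i, h (X i ω) = ENNReal.ofReal (∏ i, g (X i ω)) := by
      rw [ENNReal.ofReal_prod_of_nonneg (fun i _ => hg0 (X i ω))]
    rw [hofreal]
    exact ENNReal.ofReal_le_ofReal key_real
  -- measurability of E₀
  have hcntmeas : ∀ a, Measurable (fun ω => (Finset.univ.filter fun i => X i ω = a).card) := by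
    intro a
    have he : (fun ω => (Finset.univ.filter fun i => X i ω = a).card)
        = fun ω => ∑ i : Fin n, if X i ω = a then 1 else 0 := by
      funext ω
      rw [Finset.card_filter]
    rw [he]
    exact Finset.measurable_sum _ fun i _ =>
      Measurable.ite (hXmeas i (measurableSet_singleton a)) measurable_const measurable_const
  have hE₀meas : MeasurableSet E₀ := by
    have hT : Measurable (fun ω a => (Finset.univ.filter fun i => X i ω = a).card) :=
      measurable_pi_lambda _ hcntmeas
    have hpre : E₀ = (fun ω a => (Finset.univ.filter fun i => X i ω = a).card) ⁻¹'
        {k : α → ℕ | (fun a => (k a : ℝ) / n) ∈ C₀} := rfl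
    rw [hpre]
    apply hT
    have hsing : ∀ k : α → ℕ, MeasurableSet ({k} : Set (α → ℕ)) := by
      intro k
      have he : ({k} : Set (α → ℕ)) = ⋂ a, (fun f : α → ℕ => f a) ⁻¹' {k a} := by
        ext f
        simp [funext_iff, eq_comm]
      rw [he]
      exact MeasurableSet.iInter fun a => measurable_pi_apply a (measurableSet_singleton _)
    have he : {k : α → ℕ | (fun a => (k a : ℝ) / n) ∈ C₀}
        = ⋃ k ∈ {k : α → ℕ | (fun a => (k a : ℝ) / n) ∈ C₀}, {k} := by
      ext k
      simp only [Set.mem_setOf_eq, Set.mem_iUnion, Set.mem_singleton_iff]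
      constructor
      · intro hk; exact ⟨k, hk, rfl⟩
      · rintro ⟨k', hk', rfl⟩; exact hk'
    rw [he]
    exact MeasurableSet.biUnion (Set.to_countable _) fun k _ => hsing k
  -- the Chernoff bound
  have hmain : ENNReal.ofReal (Real.exp (n * m)) * μ E₀ ≤ 1 := by
    rw [← MeasureTheory.lintegral_indicator_const hE₀meas]
    calc ∫⁻ ω, E₀.indicator (fun _ => ENNReal.ofReal (Real.exp (n * m))) ω ∂μ
        ≤ ∫⁻ ω, ∏ i, h (X i ω) ∂μ := by
          apply MeasureTheory.lintegral_mono
          intro ω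
          by_cases hω : ω ∈ E₀
          · rw [Set.indicator_of_mem hω]
            exact hpoint ω hω
          · rw [Set.indicator_of_notMem hω]
            exact zero_le
      _ = 1 := hprod
  have hE₀bound : μ E₀ ≤ ENNReal.ofReal (Real.exp (-(n * m))) := by
    have h2 : μ E₀ ≤ (ENNReal.ofReal (Real.exp (n * m)))⁻¹ :=
      ENNReal.le_inv_iff_mul_le.mpr (by rwa [mul_comm] at hmain)
    rwa [← ENNReal.ofReal_inv_of_pos (Real.exp_pos _), ← Real.exp_neg] at h2
  -- comparing with the infimum
  have hIle : (⨅ P ∈ C, klDiv P Q) ≤ ENNReal.ofReal m := by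
    apply ENNReal.le_of_forall_pos_le_add
    intro ε hε _
    have hmem : Fc Ps ∈ closure (Fc '' C₀) :=
      image_closure_subset_closure_image hFccont (Set.mem_image_of_mem Fc hPsK)
    obtain ⟨y, hy, hdist⟩ := Metric.mem_closure_iff.mp hmem ε (by exact_mod_cast hε)
    obtain ⟨P', hP'C₀, rfl⟩ := hy
    have habs := abs_lt.mp (by rwa [Real.dist_eq] at hdist)
    have hFcP' : Fc P' < Fc Ps + ε := by linarith [habs.1, habs.2]
    obtain ⟨hP'0, hP'sum, hP'abs⟩ := hC₀sub hP'C₀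
    have hkl : klDiv P' Q = ENNReal.ofReal (Dr P' Q) := by
      rw [klDiv, if_pos hP'abs, Dr]
    have hle : (⨅ P ∈ C, klDiv P Q) ≤ klDiv P' Q :=
      iInf_le_of_le P' (iInf_le_of_le hP'C₀.1 le_rfl)
    calc (⨅ P ∈ C, klDiv P Q) ≤ ENNReal.ofReal (Dr P' Q) := hle.trans_eq hkl
      _ ≤ ENNReal.ofReal (m + ε) := by
          apply ENNReal.ofReal_le_ofReal
          rw [← hFceq P' hP'0 hP'abs]
          have hmeq : m = Fc Ps := by rw [hmdef, hFceq Ps hPs0 hPsabs]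
          rw [hmeq]
          exact hFcP'.le
      _ ≤ ENNReal.ofReal m + ε := by
          rw [ENNReal.ofReal_add hm0 ε.coe_nonneg, ENNReal.ofReal_coe_nnreal]
  have hfin : (n : ℝ≥0∞) * (⨅ P ∈ C, klDiv P Q) ≤ ENNReal.ofReal (n * m) := by
    calc (n : ℝ≥0∞) * (⨅ P ∈ C, klDiv P Q) ≤ (n : ℝ≥0∞) * ENNReal.ofReal m :=
          mul_le_mul_right hIle _
      _ = ENNReal.ofReal (n * m) := by
          rw [← ENNReal.ofReal_natCast n, ← ENNReal.ofReal_mul (Nat.cast_nonneg n)]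
  have hne : (n : ℝ≥0∞) * (⨅ P ∈ C, klDiv P Q) ≠ ⊤ :=
    (lt_of_le_of_lt hfin ENNReal.ofReal_lt_top).ne
  have htReal : ((n : ℝ≥0∞) * (⨅ P ∈ C, klDiv P Q)).toReal ≤ n * m := by
    have h3 := ENNReal.toReal_mono ENNReal.ofReal_ne_top hfin
    rwa [ENNReal.toReal_ofReal (by positivity)] at h3
  refine le_trans (le_trans hmuE hE₀bound) ?_
  rw [expNeg, if_neg hne]
  exact ENNReal.ofReal_le_ofReal (Real.exp_le_exp.mpr (by linarith))
end

section
/- Let r ≥ 0 and define the bootstrap-robust Nadaraya–Watson cost c^r = sup{ c(M) : M a model on 𝔐 with B(M, M_t) ≤ r }. Let X_1, …, X_n be i.i.d. random elements of 𝔐 with distribution M_t and let M̂_n be the empirical model. Then Prob( c(M̂_n) > c^r ) ≤ exp(−n·r). -/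
open Finset MeasureTheory ProbabilityTheory
open scoped ENNReal NNReal
open Classical

/-- The bootstrap (relative entropy) distance `B(M, M') = ∑ M log (M / M')`
between models, with the convention `0 · log 0 = 0` (the reference model `M'`
is assumed strictly positive). -/
noncomputable def bootDist {𝔐 : Type*} [Fintype 𝔐] (M M' : 𝔐 → ℝ) : ℝ :=
  ∑ m, if M m = 0 then 0 else M m * Real.log (M m / M' m)

/-- The Nadaraya–Watson contextualized cost of a model. -/
noncomputable def nwCost {𝔐 : Type*} [Fintype 𝔐] (w ℓ M : 𝔐 → ℝ) : ℝ :=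
  (∑ m, w m * ℓ m * M m) / (∑ m, w m * M m)

/-- Summing a function against fiber counts equals summing along the tuple. -/
lemma sum_mul_count {𝔐 : Type*} [Fintype 𝔐] {n : ℕ} (x : Fin n → 𝔐) (f : 𝔐 → ℝ) :
    ∑ m, f m * ((Finset.univ.filter fun i => x i = m).card : ℝ) = ∑ i, f (x i) := by
  classical
  rw [← Finset.sum_fiberwise' Finset.univ x f]
  refine Finset.sum_congr rfl fun m _ => ?_
  rw [Finset.sum_const, nsmul_eq_mul, mul_comm]

/-- The denominator of the Nadaraya–Watson cost is positive for a model. -/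
lemma denom_pos {𝔐 : Type*} [Fintype 𝔐] (w : 𝔐 → ℝ) (hw : ∀ m, 0 < w m)
    (M : 𝔐 → ℝ) (hM : IsModel M) : 0 < ∑ m, w m * M m := by
  classical
  obtain ⟨m₀, hm₀⟩ : ∃ m₀, 0 < M m₀ := by
    by_contra h
    push_neg at h
    have : ∑ m, M m = 0 := Finset.sum_eq_zero fun m _ => le_antisymm (h m) (hM.1 m)
    rw [hM.2] at this; norm_num at this
  have h1 : 0 < w m₀ * M m₀ := mul_pos (hw m₀) hm₀
  have h2 : w m₀ * M m₀ ≤ ∑ m, w m * M m :=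
    Finset.single_le_sum (fun m _ => mul_nonneg (hw m).le (hM.1 m)) (Finset.mem_univ m₀)
  linarith

/-- The measure of an event defined through the tuple of observations, for
independent observations with finite common codomain. -/
lemma meas_tuple_event {𝔐 : Type*} [Fintype 𝔐] [MeasurableSpace 𝔐]
    [MeasurableSingletonClass 𝔐] {Ω : Type*} [MeasurableSpace Ω] (μ : Measure Ω)
    {n : ℕ} (X : Fin n → Ω → 𝔐) (hXmeas : ∀ i, Measurable (X i))
    (hXindep : iIndepFun X μ)
    (Mt : 𝔐 → ℝ) (hXdist : ∀ i m, μ (X i ⁻¹' {m}) = ENNReal.ofReal (Mt m))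
    (P : (Fin n → 𝔐) → Prop) :
    μ {ω | P (fun i => X i ω)} =
      ∑ x ∈ Finset.univ.filter P, ∏ i, ENNReal.ofReal (Mt (x i)) := by
  classical
  have hset : {ω | P (fun i => X i ω)} =
      ⋃ x ∈ Finset.univ.filter P, ⋂ i, X i ⁻¹' {x i} := by
    ext ω
    simp only [Set.mem_setOf_eq, Set.mem_iUnion, Finset.mem_filter, Finset.mem_univ, true_and,
      Set.mem_iInter, Set.mem_preimage, Set.mem_singleton_iff]
    constructor
    · intro h; exact ⟨fun i => X i ω, h, fun i => rfl⟩
    · rintro ⟨x, hx, hxe⟩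
      have hxx : (fun i => X i ω) = x := funext fun i => hxe i
      rwa [hxx]
  rw [hset, measure_biUnion_finset ?_ ?_]
  · refine Finset.sum_congr rfl fun x _ => ?_
    rw [hXindep.meas_iInter fun i => ⟨{x i}, measurableSet_singleton _, rfl⟩]
    exact Finset.prod_congr rfl fun i _ => hXdist i (x i)
  · intro x hx y hy hxy
    rw [Function.onFun, Set.disjoint_left]
    intro ω hωx hωy
    simp only [Set.mem_iInter, Set.mem_preimage, Set.mem_singleton_iff] at hωx hωy
    exact hxy (funext fun i => (hωx i).symm.trans (hωy i))
  · intro x hx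
    exact MeasurableSet.iInter fun i => (hXmeas i) (measurableSet_singleton _)

/-- Key duality lemma: if every model in the relative-entropy ball of radius `r`
around `Mt` has nonpositive `g`-mean, and `g` is somewhere positive, then some
exponential tilt certifies this via a Chernoff bound. -/
lemma exists_tilt {𝔐 : Type*} [Fintype 𝔐] (Mt g : 𝔐 → ℝ)
    (hMtsum : ∑ m, Mt m = 1) (hMtpos : ∀ m, 0 < Mt m)
    (r : ℝ) (hr : 0 < r) (a : 𝔐) (ha : 0 < g a)
    (K : ∀ M : 𝔐 → ℝ, IsModel M → bootDist M Mt ≤ r → ∑ m, g m * M m ≤ 0) :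
    ∃ θ : ℝ, 0 ≤ θ ∧ ∑ m, Mt m * Real.exp (θ * g m) ≤ Real.exp (-r) := by
  classical
  by_contra hcon
  push_neg at hcon
  set f : ℝ → ℝ := fun θ => ∑ m, Mt m * Real.exp (θ * g m) with hf
  set f' : ℝ → ℝ := fun θ => ∑ m, Mt m * g m * Real.exp (θ * g m) with hf'
  have hderiv : ∀ θ, HasDerivAt f (f' θ) θ := by
    intro θ
    apply HasDerivAt.fun_sum
    intro m _
    have h1 : HasDerivAt (fun θ : ℝ => θ * g m) (g m) θ := by
      simpa using (hasDerivAt_id θ).mul_const (g m)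
    have h2 := (h1.exp).const_mul (Mt m)
    convert h2 using 1
    · rfl
    ring
  have hcont : Continuous f := by
    refine continuous_iff_continuousAt.mpr fun θ => (hderiv θ).continuousAt
  have hf0 : f 0 = 1 := by simp [hf, hMtsum]
  have hlb : ∀ θ, Mt a * Real.exp (θ * g a) ≤ f θ := by
    intro θ
    refine Finset.single_le_sum (f := fun m => Mt m * Real.exp (θ * g m))
      (fun m _ => mul_nonneg (hMtpos m).le (Real.exp_nonneg _)) (Finset.mem_univ a)
  set T : ℝ := max 0 (Real.log (1 / Mt a) / g a) with hT
  have hT0 : 0 ≤ T := le_max_left _ _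
  have hTlarge : ∀ θ, T ≤ θ → f 0 ≤ f θ := by
    intro θ hθ
    have h1 : Real.log (1 / Mt a) / g a ≤ θ := le_trans (le_max_right _ _) hθ
    have h2 : Real.log (1 / Mt a) ≤ θ * g a := (div_le_iff₀ ha).mp h1
    have h3 : 1 / Mt a ≤ Real.exp (θ * g a) := by
      calc 1 / Mt a = Real.exp (Real.log (1 / Mt a)) :=
            (Real.exp_log (one_div_pos.mpr (hMtpos a))).symm
        _ ≤ _ := Real.exp_le_exp.mpr h2
    have h4 : 1 ≤ Mt a * Real.exp (θ * g a) := by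
      have := mul_le_mul_of_nonneg_left h3 (hMtpos a).le
      have he : Mt a * (1 / Mt a) = 1 := by
        rw [mul_one_div, div_self (hMtpos a).ne']
      linarith
    rw [hf0]
    exact le_trans h4 (hlb θ)
  obtain ⟨θs, hθsmem, hθsmin⟩ :=
    (isCompact_Icc (a := (0:ℝ)) (b := T)).exists_isMinOn
      (Set.nonempty_Icc.mpr hT0) hcont.continuousOn
  have hθs0 : 0 ≤ θs := hθsmem.1
  have hglobal : ∀ θ, 0 ≤ θ → f θs ≤ f θ := by
    intro θ hθ
    by_cases hc : θ ≤ T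
    · exact hθsmin (Set.mem_Icc.mpr ⟨hθ, hc⟩)
    · push_neg at hc
      exact le_trans (hθsmin (Set.mem_Icc.mpr ⟨le_refl 0, hT0⟩)) (hTlarge θ hc.le)
  have hE : 0 ≤ f' θs ∧ θs * f' θs = 0 := by
    rcases eq_or_lt_of_le hθs0 with h0 | hpos
    · constructor
      · have ht := hasDerivAt_iff_tendsto_slope.mp (hderiv θs)
        have ht2 : Filter.Tendsto (slope f θs) (nhdsWithin θs (Set.Ioi θs)) (nhds (f' θs)) :=
          ht.mono_left (nhdsWithin_mono _ (fun t htm => ne_of_gt htm))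
        refine ge_of_tendsto ht2 ?_
        filter_upwards [self_mem_nhdsWithin] with t htm
        have h1 : f θs ≤ f t := hglobal t (le_of_lt (h0 ▸ htm))
        have h2 : 0 < t - θs := sub_pos.mpr htm
        rw [slope_def_field]
        exact div_nonneg (by linarith) h2.le
      · rw [← h0, zero_mul]
    · have hloc : IsLocalMin f θs := by
        have hmem : Set.Ioi (0:ℝ) ∈ nhds θs := Ioi_mem_nhds hpos
        filter_upwards [hmem] with t htm
        exact hglobal t htm.le
      have hz := hloc.hasDerivAt_eq_zero (hderiv θs)
      exact ⟨hz.ge, by rw [hz, mul_zero]⟩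
  set S := f θs with hS
  have hSgt : Real.exp (-r) < S := hcon θs hθs0
  have hSpos : 0 < S := lt_trans (Real.exp_pos _) hSgt
  have hlogS : -r < Real.log S := by
    have := Real.log_lt_log (Real.exp_pos (-r)) hSgt
    rwa [Real.log_exp] at this
  set Ms : 𝔐 → ℝ := fun m => Mt m * Real.exp (θs * g m) / S with hMs
  have hMspos : ∀ m, 0 < Ms m := fun m => by
    have := hMtpos m
    have := Real.exp_pos (θs * g m)
    positivity
  have hMssum : ∑ m, Ms m = 1 := by
    rw [hMs, ← Finset.sum_div]
    exact div_self hSpos.ne'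
  have hMsE : ∑ m, g m * Ms m = f' θs / S := by
    have h : f' θs = ∑ m, Mt m * g m * Real.exp (θs * g m) := rfl
    rw [h, Finset.sum_div]
    exact Finset.sum_congr rfl fun m _ => by rw [hMs]; ring
  have hMsB : bootDist Ms Mt = - Real.log S := by
    unfold bootDist
    have hterm : ∀ m ∈ Finset.univ, (if Ms m = 0 then (0:ℝ) else Ms m * Real.log (Ms m / Mt m))
        = θs * (g m * Ms m) - Real.log S * Ms m := by
      intro m _
      rw [if_neg (hMspos m).ne']
      have h1 : Ms m / Mt m = Real.exp (θs * g m) / S := by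
        have hb : Ms m = Mt m * (Real.exp (θs * g m) / S) := by rw [hMs]; ring
        rw [hb, mul_div_cancel_left₀ _ (hMtpos m).ne']
      rw [h1, Real.log_div (Real.exp_ne_zero _) hSpos.ne', Real.log_exp]
      ring
    rw [Finset.sum_congr rfl hterm, Finset.sum_sub_distrib, ← Finset.mul_sum, ← Finset.mul_sum,
      hMssum, hMsE, mul_one]
    have hz : θs * (f' θs / S) = 0 := by
      rw [mul_div_assoc', hE.2, zero_div]
    rw [hz]
    ring
  -- perturbation towards `a`
  set D : ℝ → ℝ := fun ε => ∑ m, ((1-ε) * Ms m + ε * (if m = a then 1 else 0)) *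
      Real.log (((1-ε) * Ms m + ε * (if m = a then 1 else 0)) / Mt m) with hD
  have hD0 : D 0 = bootDist Ms Mt := by
    unfold bootDist
    refine Finset.sum_congr rfl fun m _ => ?_
    rw [if_neg (hMspos m).ne']
    norm_num
  have hDcont : Filter.Tendsto D (nhds 0) (nhds (D 0)) := by
    have hterm : ∀ m ∈ (Finset.univ : Finset 𝔐), ContinuousAt
        (fun ε : ℝ => ((1-ε) * Ms m + ε * (if m = a then 1 else 0)) *
          Real.log (((1-ε) * Ms m + ε * (if m = a then 1 else 0)) / Mt m)) 0 := by
      intro m _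
      have hA : ContinuousAt (fun ε : ℝ => (1-ε) * Ms m + ε * (if m = a then 1 else 0)) 0 := by
        fun_prop
      have hA0 : (1-(0:ℝ)) * Ms m + 0 * (if m = a then 1 else 0) = Ms m := by norm_num
      have hlog : ContinuousAt (fun ε : ℝ =>
          Real.log (((1-ε) * Ms m + ε * (if m = a then 1 else 0)) / Mt m)) 0 := by
        refine ContinuousAt.log (hA.div_const _) ?_
        rw [hA0]
        exact div_ne_zero (hMspos m).ne' (hMtpos m).ne'
      exact hA.mul hlog
    exact tendsto_finset_sum Finset.univ hterm
  have hDlt : ∀ᶠ ε in nhdsWithin (0:ℝ) (Set.Ioi 0), D ε < r := by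
    have h2 : D 0 < r := by rw [hD0, hMsB]; linarith
    exact (hDcont.eventually_lt_const h2).filter_mono nhdsWithin_le_nhds
  have hsmall : ∀ᶠ ε in nhdsWithin (0:ℝ) (Set.Ioi 0), ε < 1 :=
    Filter.eventually_of_mem (nhdsWithin_le_nhds (Iio_mem_nhds one_pos)) (fun x h => h)
  obtain ⟨ε, ⟨hεD, hε1⟩, hεpos⟩ := ((hDlt.and hsmall).and self_mem_nhdsWithin).exists
  set M' : 𝔐 → ℝ := fun m => (1-ε) * Ms m + ε * (if m = a then 1 else 0) with hM'
  have hM'pos : ∀ m, 0 < M' m := fun m => by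
    have h1 : 0 < (1-ε) * Ms m := mul_pos (by linarith) (hMspos m)
    have h2 : 0 ≤ ε * (if m = a then 1 else 0) := by positivity
    simp only [hM']
    linarith
  have hM'model : IsModel M' := by
    constructor
    · exact fun m => (hM'pos m).le
    · rw [hM', Finset.sum_add_distrib, ← Finset.mul_sum, ← Finset.mul_sum, hMssum]
      simp
  have hM'B : bootDist M' Mt ≤ r := by
    have heq : bootDist M' Mt = D ε := by
      unfold bootDist
      refine Finset.sum_congr rfl fun m _ => ?_
      rw [if_neg (hM'pos m).ne']
    rw [heq]
    exact hεD.le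
  have hcontr := K M' hM'model hM'B
  have hgt : 0 < ∑ m, g m * M' m := by
    have hsum : ∑ m, g m * M' m = (1-ε) * (∑ m, g m * Ms m) + ε * g a := by
      simp only [hM', mul_add]
      rw [Finset.sum_add_distrib]
      congr 1
      · rw [Finset.mul_sum]
        exact Finset.sum_congr rfl fun m _ => by ring
      · have : ∀ m ∈ Finset.univ, g m * (ε * (if m = a then 1 else 0))
            = if m = a then ε * g a else 0 := by
          intro m _
          by_cases h : m = a
          · subst h; simp; ring
          · simp [h]
        rw [Finset.sum_congr rfl this, Finset.sum_ite_eq' Finset.univ a (fun _ => ε * g a)]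
        simp
    rw [hsum, hMsE]
    have h1 : 0 ≤ (1-ε) * (f' θs / S) :=
      mul_nonneg (by linarith) (div_nonneg hE.1 hSpos.le)
    have h2 : 0 < ε * g a := mul_pos hεpos ha
    linarith
  linarith

/-- **bootstrap performance of the Nadaraya–Watson formulation.**
The bootstrap-robust Nadaraya–Watson cost with radius `r` disappoints on
bootstrap data resampled i.i.d. from the training model `M_t` with probability
at most `exp(−n·r)`. -/
theorem bootstrap_robust_nadaraya_watson_disappointment
    {𝔐 : Type*} [Fintype 𝔐] [Nonempty 𝔐]
    [MeasurableSpace 𝔐] [MeasurableSingletonClass 𝔐]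
    (w ℓ : 𝔐 → ℝ) (hw : ∀ m, 0 < w m)
    (Mt : 𝔐 → ℝ) (hMt : IsModel Mt) (hMtpos : ∀ m, 0 < Mt m)
    (r : ℝ) (hr : 0 ≤ r)
    (crob : ℝ)
    (hcrob : crob = sSup {v : ℝ | ∃ M : 𝔐 → ℝ, IsModel M ∧
        bootDist M Mt ≤ r ∧ v = nwCost w ℓ M})
    {Ω : Type*} [MeasurableSpace Ω] (μ : Measure Ω) [IsProbabilityMeasure μ]
    (n : ℕ) (hn : 1 ≤ n)
    (X : Fin n → Ω → 𝔐) (hXmeas : ∀ i, Measurable (X i))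
    (hXindep : iIndepFun X μ)
    (hXdist : ∀ i m, μ (X i ⁻¹' {m}) = ENNReal.ofReal (Mt m)) :
    μ {ω | crob <
        nwCost w ℓ (fun m => ((Finset.univ.filter fun i => X i ω = m).card : ℝ) / n)}
      ≤ ENNReal.ofReal (Real.exp (-(n : ℝ) * r)) := by
  classical
  rcases eq_or_lt_of_le hr with hr0 | hrpos
  · -- r = 0 : the bound is `1`, trivial for a probability measure.
    have h1 : ENNReal.ofReal (Real.exp (-(n : ℝ) * r)) = 1 := by
      rw [← hr0]
      norm_num
    rw [h1]
    exact prob_le_one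
  set g : 𝔐 → ℝ := fun m => w m * (ℓ m - crob) with hg
  -- every model in the ball has nonpositive g-mean
  have hK : ∀ M : 𝔐 → ℝ, IsModel M → bootDist M Mt ≤ r → ∑ m, g m * M m ≤ 0 := by
    intro M hM hB
    have hbdd : BddAbove {v : ℝ | ∃ M : 𝔐 → ℝ, IsModel M ∧
        bootDist M Mt ≤ r ∧ v = nwCost w ℓ M} := by
      refine ⟨Finset.univ.sup' Finset.univ_nonempty ℓ, ?_⟩
      rintro v ⟨M₁, hM₁, -, rfl⟩
      have hden := denom_pos w hw M₁ hM₁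
      have hnum : ∑ m, w m * ℓ m * M₁ m
          ≤ (Finset.univ.sup' Finset.univ_nonempty ℓ) * ∑ m, w m * M₁ m := by
        rw [Finset.mul_sum]
        refine Finset.sum_le_sum fun m _ => ?_
        have hle : ℓ m ≤ Finset.univ.sup' Finset.univ_nonempty ℓ :=
          Finset.le_sup' ℓ (Finset.mem_univ m)
        have hwm : 0 ≤ w m * M₁ m := mul_nonneg (hw m).le (hM₁.1 m)
        calc w m * ℓ m * M₁ m = ℓ m * (w m * M₁ m) := by ring
          _ ≤ _ := mul_le_mul_of_nonneg_right hle hwm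
      exact (div_le_iff₀ hden).mpr hnum
    have hmem : nwCost w ℓ M ∈ {v : ℝ | ∃ M : 𝔐 → ℝ, IsModel M ∧
        bootDist M Mt ≤ r ∧ v = nwCost w ℓ M} := ⟨M, hM, hB, rfl⟩
    have hle : nwCost w ℓ M ≤ crob := hcrob ▸ le_csSup hbdd hmem
    have hden := denom_pos w hw M hM
    rw [nwCost, div_le_iff₀ hden] at hle
    have heq : ∑ m, g m * M m = (∑ m, w m * ℓ m * M m) - crob * ∑ m, w m * M m := by
      rw [Finset.mul_sum, ← Finset.sum_sub_distrib]
      exact Finset.sum_congr rfl fun m _ => by rw [hg]; ring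
    linarith [heq ▸ sub_nonpos.mpr hle]
  -- the event implies a positive empirical g-sum
  have hnpos : (0:ℝ) < n := by exact_mod_cast hn
  have hsub : {ω | crob <
      nwCost w ℓ (fun m => ((Finset.univ.filter fun i => X i ω = m).card : ℝ) / n)}
      ⊆ {ω | 0 < ∑ i, g (X i ω)} := by
    intro ω hω
    simp only [Set.mem_setOf_eq] at hω ⊢
    set Mh : 𝔐 → ℝ := fun m => ((Finset.univ.filter fun i => X i ω = m).card : ℝ) / n with hMh
    have hcount : ∑ m, (1:ℝ) * ((Finset.univ.filter fun i => X i ω = m).card : ℝ)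
        = ∑ i : Fin n, (1:ℝ) := sum_mul_count (fun i => X i ω) (fun _ => 1)
    have hMhsum : ∑ m, Mh m = 1 := by
      rw [hMh, ← Finset.sum_div]
      simp only [one_mul] at hcount
      rw [hcount]
      simp [div_self hnpos.ne']
    have hMhnn : ∀ m, 0 ≤ Mh m := fun m => by
      rw [hMh]
      positivity
    have hden := denom_pos w hw Mh ⟨hMhnn, hMhsum⟩
    rw [nwCost, lt_div_iff₀ hden] at hω
    have h1 : ∑ m, g m * Mh m = (∑ i, g (X i ω)) / n := by
      rw [← sum_mul_count (fun i => X i ω) g, Finset.sum_div]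
      exact Finset.sum_congr rfl fun m _ => by rw [hMh]; ring
    have h2 : 0 < ∑ m, g m * Mh m := by
      have heq : ∑ m, g m * Mh m = (∑ m, w m * ℓ m * Mh m) - crob * ∑ m, w m * Mh m := by
        rw [Finset.mul_sum, ← Finset.sum_sub_distrib]
        exact Finset.sum_congr rfl fun m _ => by rw [hg]; ring
      rw [heq]
      linarith
    rw [h1, lt_div_iff₀ hnpos, zero_mul] at h2
    exact h2
  refine le_trans (measure_mono hsub) ?_
  by_cases hA : ∀ m, g m ≤ 0
  · have hempty : {ω | 0 < ∑ i, g (X i ω)} = ∅ := by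
      ext ω
      simp only [Set.mem_setOf_eq, Set.mem_empty_iff_false, iff_false, not_lt]
      exact Finset.sum_nonpos fun i _ => hA (X i ω)
    rw [hempty]
    simp
  push_neg at hA
  obtain ⟨a, ha⟩ := hA
  obtain ⟨θ, hθ0, hθ⟩ := exists_tilt Mt g hMt.2 hMtpos r hrpos a ha hK
  have hSnn : 0 ≤ ∑ m, Mt m * Real.exp (θ * g m) :=
    Finset.sum_nonneg fun m _ => mul_nonneg (hMtpos m).le (Real.exp_nonneg _)
  have hmeas := meas_tuple_event μ X hXmeas hXindep Mt hXdist (fun x => 0 < ∑ i, g (x i))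
  rw [show {ω | 0 < ∑ i, g (X i ω)} = {ω | (fun x : Fin n → 𝔐 => 0 < ∑ i, g (x i))
      (fun i => X i ω)} from rfl, hmeas]
  have hofreal : ∀ x : Fin n → 𝔐, ∏ i, ENNReal.ofReal (Mt (x i))
      = ENNReal.ofReal (∏ i, Mt (x i)) :=
    fun x => (ENNReal.ofReal_prod_of_nonneg fun i _ => (hMtpos (x i)).le).symm
  calc ∑ x ∈ Finset.univ.filter (fun x : Fin n → 𝔐 => 0 < ∑ i, g (x i)),
        ∏ i, ENNReal.ofReal (Mt (x i))
      = ENNReal.ofReal (∑ x ∈ Finset.univ.filter (fun x : Fin n → 𝔐 => 0 < ∑ i, g (x i)),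
          ∏ i, Mt (x i)) := by
        rw [ENNReal.ofReal_sum_of_nonneg fun x _ =>
          Finset.prod_nonneg fun i _ => (hMtpos (x i)).le]
        exact Finset.sum_congr rfl fun x _ => hofreal x
    _ ≤ ENNReal.ofReal (Real.exp (-(n : ℝ) * r)) := by
        apply ENNReal.ofReal_le_ofReal
        calc ∑ x ∈ Finset.univ.filter (fun x : Fin n → 𝔐 => 0 < ∑ i, g (x i)), ∏ i, Mt (x i)
            ≤ ∑ x ∈ Finset.univ.filter (fun x : Fin n → 𝔐 => 0 < ∑ i, g (x i)),
              ∏ i, (Mt (x i) * Real.exp (θ * g (x i))) := by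
              refine Finset.sum_le_sum fun x hx => ?_
              have hPx : 0 < ∑ i, g (x i) := (Finset.mem_filter.mp hx).2
              have hexp : ∏ i, (Mt (x i) * Real.exp (θ * g (x i)))
                  = (∏ i, Mt (x i)) * Real.exp (θ * ∑ i, g (x i)) := by
                rw [Finset.prod_mul_distrib, ← Real.exp_sum, Finset.mul_sum]
              rw [hexp]
              have h1 : 1 ≤ Real.exp (θ * ∑ i, g (x i)) :=
                Real.one_le_exp (mul_nonneg hθ0 hPx.le)
              exact le_mul_of_one_le_right (Finset.prod_nonneg fun i _ => (hMtpos (x i)).le) h1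
          _ ≤ ∑ x : Fin n → 𝔐, ∏ i, (Mt (x i) * Real.exp (θ * g (x i))) := by
              refine Finset.sum_le_sum_of_subset_of_nonneg (Finset.filter_subset _ _)
                fun x _ _ => Finset.prod_nonneg fun i _ =>
                  mul_nonneg (hMtpos (x i)).le (Real.exp_nonneg _)
          _ = (∑ m, Mt m * Real.exp (θ * g m)) ^ n := by
              rw [Fintype.sum_pow (fun m => Mt m * Real.exp (θ * g m)) n]
          _ ≤ (Real.exp (-r)) ^ n := pow_le_pow_left₀ hSnn hθ n
          _ = Real.exp (-(n : ℝ) * r) := by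
              rw [← Real.exp_nat_mul]
              ring_nf
end

section
/- Assume 1 ≤ k ≤ n and that n·M_t(m) is an integer for every m ∈ 𝔐. Let r ≥ 0, and for each j ∈ {1,…,J} define the minimum radius r*_j = inf{ B(M, M_t) : M a model with M ∈ 𝒩_j } ∈ [0,∞] (infimum over an empty set being +∞). Define the bootstrap-robust nearest-neighbors cost c^{r,nn} = max over j ∈ {1,…,J} of sup{ c_j(M) : M a model with M ∈ 𝒩_j and B(M, M_t) ≤ r } (with empty suprema equal to −∞). Let X_1, …, X_n be i.i.d. with distribution M_t and let M̂_n be the empirical model; since n·M̂_n is integer-valued there is a unique index j(M̂_n) with M̂_n ∈ 𝒩_{j(M̂_n)}. Then Prob( c_{j(M̂_n)}(M̂_n) > c^{r,nn} ) ≤ Σ_{j=1}^{J} exp(−n·max{r, r*_j}), with the convention exp(−∞) = 0. -/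
open Finset MeasureTheory ProbabilityTheory
open scoped ENNReal NNReal
open Classical

/-- The `j`-th partial nearest-neighbors cost of a model. -/
noncomputable def nnCost {𝔐 : Type*} [Fintype 𝔐] (N : ℕ → Finset 𝔐)
    (w ℓ : 𝔐 → ℝ) (j : ℕ) (M : 𝔐 → ℝ) : ℝ :=
  (∑ m ∈ N j, w m * ℓ m * M m) / (∑ m ∈ N j, w m * M m)

section Aux
variable {𝔐 : Type*} [Fintype 𝔐]

lemma bootDist_eq (M M' : 𝔐 → ℝ) :
    bootDist M M' = ∑ m, M m * Real.log (M m / M' m) := by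
  unfold bootDist
  refine Finset.sum_congr rfl fun m _ => ?_
  split_ifs with h
  · simp [h]
  · rfl

lemma mul_log_div_ge {x y : ℝ} (hx : 0 < x) (hy : 0 < y) : y - x ≤ y * Real.log (y / x) := by
  have h1 := Real.log_le_sub_one_of_pos (div_pos hx hy)
  have h2 : Real.log (y / x) = - Real.log (x / y) := by
    rw [Real.log_div hy.ne' hx.ne', Real.log_div hx.ne' hy.ne']; ring
  have h3 : y * Real.log (x / y) ≤ y * (x / y - 1) :=
    mul_le_mul_of_nonneg_left h1 hy.le
  have h4 : y * (x / y - 1) = x - y := by field_simp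
  rw [h2]; nlinarith

lemma tangent_le {c x y : ℝ} (hc : 0 < c) (hx : 0 < x) (hy : 0 ≤ y) :
    x * Real.log (x / c) + (Real.log (x / c) + 1) * (y - x) ≤ y * Real.log (y / c) := by
  rcases eq_or_lt_of_le hy with h | h
  · rw [← h]
    have : x * Real.log (x / c) + (Real.log (x / c) + 1) * (0 - x) = -x := by ring
    rw [this]
    simp [hx.le]
  · have key := mul_log_div_ge hx h
    have hlog : Real.log (y / c) - Real.log (x / c) = Real.log (y / x) := by
      rw [Real.log_div h.ne' hc.ne', Real.log_div hx.ne' hc.ne', Real.log_div h.ne' hx.ne']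
      ring
    have h5 : y * Real.log (y / x) = y * Real.log (y / c) - y * Real.log (x / c) := by
      rw [← hlog]; ring
    nlinarith

lemma model_le_one {M : 𝔐 → ℝ} (hM : IsModel M) (m : 𝔐) : M m ≤ 1 := by
  have := Finset.single_le_sum (f := M) (fun i _ => hM.1 i) (Finset.mem_univ m)
  rwa [hM.2] at this

lemma bootDist_nonneg {M Mt : 𝔐 → ℝ} (hM : IsModel M) (hMt : IsModel Mt)
    (hpos : ∀ m, 0 < Mt m) : 0 ≤ bootDist M Mt := by
  rw [bootDist_eq]
  have key : ∀ m ∈ Finset.univ, M m - Mt m ≤ M m * Real.log (M m / Mt m) := by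
    intro m _
    rcases (hM.1 m).eq_or_lt with h | h
    · rw [← h]; simpa using (hpos m).le
    · exact mul_log_div_ge (hpos m) h
  calc (0:ℝ) = ∑ m, (M m - Mt m) := by
        rw [Finset.sum_sub_distrib, hM.2, hMt.2]; ring
    _ ≤ _ := Finset.sum_le_sum key

end Aux

set_option maxHeartbeats 1000000 in
lemma exists_certificate {𝔐 : Type*} [Fintype 𝔐] (Mt : 𝔐 → ℝ) (hMt : IsModel Mt)
    (hpos : ∀ m, 0 < Mt m) (C : Set (𝔐 → ℝ)) (hconv : Convex ℝ C)
    (hmod : ∀ Q ∈ C, IsModel Q) (t : ℝ) (ht : ∀ Q ∈ C, t ≤ bootDist Q Mt)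
    (ε : ℝ) (hε : 0 < ε) :
    ∃ h : 𝔐 → ℝ, (∀ m, 0 < h m) ∧ (∑ m, Mt m * h m ≤ 1) ∧
      ∀ Q ∈ C, t - ε ≤ ∑ m, Q m * Real.log (h m) := by
  rcases C.eq_empty_or_nonempty with rfl | ⟨Q0, hQ0⟩
  · exact ⟨fun _ => 1, fun _ => one_pos, by simp [hMt.2], by simp⟩
  -- 𝔐 is nonempty
  have hne : (Finset.univ : Finset 𝔐).Nonempty := by
    by_contra h
    rw [Finset.not_nonempty_iff_eq_empty] at h
    have := hMt.2
    rw [h] at this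
    simp at this
  -- minimum of Mt
  set c : ℝ := Finset.univ.inf' hne Mt with hc
  have hc0 : 0 < c := by
    rw [hc, Finset.lt_inf'_iff]
    exact fun m _ => hpos m
  have hcle : ∀ m, c ≤ Mt m := fun m => Finset.inf'_le _ (Finset.mem_univ m)
  have hc1 : c ≤ 1 := by
    obtain ⟨m0, _⟩ := hne
    exact (hcle m0).trans (model_le_one hMt m0)
  -- choice of δ and λ
  set δ : ℝ := 1 - Real.exp (-(ε/4)) with hδ
  have hδ0 : 0 < δ := by
    have : Real.exp (-(ε/4)) < 1 := Real.exp_lt_one_iff.2 (by linarith)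
    simp only [hδ]; linarith
  have hδ1 : δ < 1 := by
    have := Real.exp_pos (-(ε/4)); simp only [hδ]; linarith
  have hlogδ : Real.log (1 - δ) = -(ε/4) := by
    rw [hδ]; simp [Real.log_exp]
  set lam : ℝ := δ * c with hlam
  have hlam0 : 0 < lam := mul_pos hδ0 hc0
  have hlamδ : lam ≤ δ := by
    nlinarith
  have hlam1 : lam < 1 := lt_of_le_of_lt hlamδ hδ1
  have hloglam : -(ε/4) ≤ Real.log (1 - lam) := by
    rw [← hlogδ]
    exact Real.log_le_log (by linarith) (by linarith)
  clear_value c δ lam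
  -- approximate minimizer
  set S : Set ℝ := (fun Q => bootDist Q Mt) '' C with hS
  have hSne : S.Nonempty := ⟨_, Set.mem_image_of_mem _ hQ0⟩
  have hSbdd : BddBelow S := by
    refine ⟨t, ?_⟩
    rintro x ⟨Q, hQ, rfl⟩
    exact ht Q hQ
  obtain ⟨d, ⟨Qs, hQs, rfl⟩, hd⟩ := exists_lt_of_csInf_lt hSne
    (show sInf S < sInf S + lam * ε / 2 by linarith [mul_pos hlam0 (half_pos hε)])
  have hopt : ∀ Q ∈ C, bootDist Qs Mt - lam * ε / 2 ≤ bootDist Q Mt := by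
    intro Q hQ
    have h1 : sInf S ≤ bootDist Q Mt := csInf_le hSbdd (Set.mem_image_of_mem _ hQ)
    linarith
  have hQsM := hmod Qs hQs
  -- the certificate
  refine ⟨fun m => ((1 - δ) * Qs m + δ * Mt m) / Mt m, ?_, ?_, ?_⟩
  · intro m
    have h1 : 0 ≤ (1 - δ) * Qs m := mul_nonneg (by linarith) (hQsM.1 m)
    have h2 : 0 < δ * Mt m := mul_pos hδ0 (hpos m)
    exact div_pos (by linarith) (hpos m)
  · have : ∀ m, Mt m * (((1 - δ) * Qs m + δ * Mt m) / Mt m)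
        = (1 - δ) * Qs m + δ * Mt m := fun m => mul_div_cancel₀ _ (hpos m).ne'
    rw [Finset.sum_congr rfl fun m _ => this m]
    rw [Finset.sum_add_distrib, ← Finset.mul_sum, ← Finset.mul_sum, hQsM.2, hMt.2]
    norm_num
  · intro Q hQ
    have hQM := hmod Q hQ
    set Qlam : 𝔐 → ℝ := fun m => (1 - lam) * Qs m + lam * Q m with hQlam
    clear_value Qlam
    have hQlamC : Qlam ∈ C := by
      have h := hconv hQs hQ (by linarith : (0:ℝ) ≤ 1 - lam) hlam0.le (by ring)
      have e : (1 - lam) • Qs + lam • Q = Qlam := by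
        funext m; simp [hQlam, smul_eq_mul]
      rwa [e] at h
    have hQlamM := hmod Qlam hQlamC
    have hQlam0 : ∀ m, Qlam m = 0 → Qs m = 0 ∧ Q m = 0 := by
      intro m hm
      have h1 : 0 ≤ (1 - lam) * Qs m := mul_nonneg (by linarith) (hQsM.1 m)
      have h2 : 0 ≤ lam * Q m := mul_nonneg hlam0.le (hQM.1 m)
      have hql : (1 - lam) * Qs m + lam * Q m = 0 := by
        rw [hQlam] at hm; exact hm
      constructor
      · by_contra h
        have : 0 < Qs m := lt_of_le_of_ne (hQsM.1 m) (Ne.symm h)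
        nlinarith
      · by_contra h
        have : 0 < Q m := lt_of_le_of_ne (hQM.1 m) (Ne.symm h)
        nlinarith
    -- step (a)
    have hA : bootDist Qlam Mt
        + ∑ m, (Real.log (Qlam m / Mt m) + 1) * (Qs m - Qlam m)
        ≤ bootDist Qs Mt := by
      rw [bootDist_eq, bootDist_eq, ← Finset.sum_add_distrib]
      refine Finset.sum_le_sum fun m _ => ?_
      rcases (hQlamM.1 m).eq_or_lt with hz | hz
      · obtain ⟨h1, _⟩ := hQlam0 m hz.symm
        rw [← hz, h1]
        simp
      · exact tangent_le (hpos m) hz (hQsM.1 m)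
    have hsumdiff : ∑ m, (Qs m - Qlam m) = 0 := by
      rw [Finset.sum_sub_distrib, hQsM.2, hQlamM.2]; ring
    have hDQlam : bootDist Qs Mt - lam * ε / 2 ≤ bootDist Qlam Mt := hopt _ hQlamC
    have hA2 : ∑ m, Real.log (Qlam m / Mt m) * (Qs m - Q m) ≤ ε / 2 := by
      have e1 : ∑ m, (Real.log (Qlam m / Mt m) + 1) * (Qs m - Qlam m)
          = ∑ m, Real.log (Qlam m / Mt m) * (Qs m - Qlam m)
            + ∑ m, (Qs m - Qlam m) := by
        rw [← Finset.sum_add_distrib]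
        exact Finset.sum_congr rfl fun m _ => by ring
      have e2 : ∀ m, Qs m - Qlam m = lam * (Qs m - Q m) := fun m => by
        simp only [hQlam]; ring
      have e3 : ∑ m, Real.log (Qlam m / Mt m) * (Qs m - Qlam m)
          = lam * ∑ m, Real.log (Qlam m / Mt m) * (Qs m - Q m) := by
        rw [Finset.mul_sum]
        exact Finset.sum_congr rfl fun m _ => by rw [e2 m]; ring
      have h6 : lam * ∑ m, Real.log (Qlam m / Mt m) * (Qs m - Q m) ≤ lam * ε / 2 := by
        have := hA
        rw [e1, e3, hsumdiff] at this
        linarith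
      have := (mul_le_mul_iff_right₀ hlam0).mp (by linarith : lam * ∑ m, Real.log (Qlam m / Mt m) * (Qs m - Q m) ≤ lam * (ε / 2))
      linarith
    -- step (b)
    have hB : bootDist Qs Mt + Real.log (1 - lam) ≤ ∑ m, Qs m * Real.log (Qlam m / Mt m) := by
      have key : ∀ m ∈ Finset.univ,
          Qs m * Real.log (Qs m / Mt m) + Qs m * Real.log (1 - lam)
          ≤ Qs m * Real.log (Qlam m / Mt m) := by
        intro m _
        rcases (hQsM.1 m).eq_or_lt with hz | hz
        · rw [← hz]; simp
        · have hql : (1 - lam) * Qs m ≤ Qlam m := by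
            have h0 : 0 ≤ lam * Q m := mul_nonneg hlam0.le (hQM.1 m)
            simp only [hQlam]; linarith
          have hpos2 : 0 < (1 - lam) * (Qs m / Mt m) :=
            mul_pos (by linarith) (div_pos hz (hpos m))
          have heq : (1 - lam) * Qs m / Mt m = (1 - lam) * (Qs m / Mt m) := by ring
          have hlog2 : Real.log ((1 - lam) * (Qs m / Mt m)) ≤ Real.log (Qlam m / Mt m) := by
            refine Real.log_le_log hpos2 ?_
            rw [← heq]
            exact (div_le_div_iff_of_pos_right (hpos m)).2 hql
          rw [Real.log_mul (by linarith : (1:ℝ) - lam ≠ 0) (div_pos hz (hpos m)).ne'] at hlog2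
          have := mul_le_mul_of_nonneg_left hlog2 hz.le
          nlinarith
      have hsum := Finset.sum_le_sum key
      rw [Finset.sum_add_distrib, ← Finset.sum_mul, hQsM.2, one_mul, ← bootDist_eq] at hsum
      exact hsum
    -- combine (a) and (b)
    have hAB : bootDist Qs Mt + Real.log (1 - lam) - ε / 2
        ≤ ∑ m, Q m * Real.log (Qlam m / Mt m) := by
      have e4 : ∑ m, Q m * Real.log (Qlam m / Mt m)
          = ∑ m, Qs m * Real.log (Qlam m / Mt m)
            - ∑ m, Real.log (Qlam m / Mt m) * (Qs m - Q m) := by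
        rw [← Finset.sum_sub_distrib]
        exact Finset.sum_congr rfl fun m _ => by ring
      rw [e4]
      linarith
    -- step (c)
    have hC : ∑ m, Q m * Real.log (Qlam m / Mt m) + Real.log (1 - δ)
        ≤ ∑ m, Q m * Real.log (((1 - δ) * Qs m + δ * Mt m) / Mt m) := by
      have key : ∀ m ∈ Finset.univ,
          Q m * Real.log (Qlam m / Mt m) + Q m * Real.log (1 - δ)
          ≤ Q m * Real.log (((1 - δ) * Qs m + δ * Mt m) / Mt m) := by
        intro m _
        rcases (hQM.1 m).eq_or_lt with hz | hz
        · rw [← hz]; simp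
        · have hQlampos : 0 < Qlam m := by
            have h1 : 0 ≤ (1 - lam) * Qs m := mul_nonneg (by linarith) (hQsM.1 m)
            have h2 : 0 < lam * Q m := mul_pos hlam0 hz
            simp only [hQlam]; linarith
          have hnum : (1 - δ) * Qlam m ≤ (1 - δ) * Qs m + δ * Mt m := by
            have hQ1 : Q m ≤ 1 := model_le_one hQM m
            have hMtm : c ≤ Mt m := hcle m
            have hQsnn : 0 ≤ Qs m := hQsM.1 m
            have e5 : (1 - δ) * Qlam m
                = (1 - δ) * (1 - lam) * Qs m + (1 - δ) * lam * Q m := by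
              simp only [hQlam]; ring
            rw [e5]
            have i1 : (1 - δ) * (1 - lam) * Qs m ≤ (1 - δ) * Qs m := by
              have k := mul_nonneg (mul_nonneg (by linarith : (0:ℝ) ≤ 1 - δ) hlam0.le) hQsnn
              linarith [k]
            have i2 : (1 - δ) * lam * Q m ≤ δ * Mt m := by
              have k1 : 0 ≤ δ * Q m := mul_nonneg hδ0.le hz.le
              have k2 : (1 - δ) * Q m ≤ 1 := by linarith [k1]
              have k3 : lam * ((1 - δ) * Q m) ≤ lam * 1 := by
                exact mul_le_mul_of_nonneg_left k2 hlam0.le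
              have j2 : lam ≤ δ * Mt m := by
                rw [hlam]
                exact mul_le_mul_of_nonneg_left (hcle m) hδ0.le
              linarith [k3]
            linarith
          have hpos3 : 0 < (1 - δ) * (Qlam m / Mt m) :=
            mul_pos (by linarith) (div_pos hQlampos (hpos m))
          have heq : (1 - δ) * Qlam m / Mt m = (1 - δ) * (Qlam m / Mt m) := by ring
          have hlog3 : Real.log ((1 - δ) * (Qlam m / Mt m))
              ≤ Real.log (((1 - δ) * Qs m + δ * Mt m) / Mt m) := by
            refine Real.log_le_log hpos3 ?_
            rw [← heq]
            exact (div_le_div_iff_of_pos_right (hpos m)).2 hnum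
          rw [Real.log_mul (by linarith : (1:ℝ) - δ ≠ 0)
            (div_pos hQlampos (hpos m)).ne'] at hlog3
          have := mul_le_mul_of_nonneg_left hlog3 hz.le
          nlinarith
      have hsum := Finset.sum_le_sum key
      rw [Finset.sum_add_distrib, ← Finset.sum_mul, hQM.2, one_mul] at hsum
      exact hsum
    -- conclusion
    have hts : t ≤ bootDist Qs Mt := ht Qs hQs
    have hlogδ2 : Real.log (1 - δ) = -(ε/4) := hlogδ
    linarith

lemma le_ofReal_exp_of_forall_pos {a : ℝ≥0∞} {c : ℝ}
    (h : ∀ ε : ℝ, 0 < ε → a ≤ ENNReal.ofReal (Real.exp (c + ε))) :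
    a ≤ ENNReal.ofReal (Real.exp c) := by
  have htend : Filter.Tendsto (fun k : ℕ => ENNReal.ofReal (Real.exp (c + 1 / (k + 1))))
      Filter.atTop (nhds (ENNReal.ofReal (Real.exp c))) := by
    have h1 : Filter.Tendsto (fun k : ℕ => (1 : ℝ) / (k + 1)) Filter.atTop (nhds 0) :=
      tendsto_one_div_add_atTop_nhds_zero_nat
    have h2 : Continuous fun x : ℝ => ENNReal.ofReal (Real.exp (c + x)) :=
      ENNReal.continuous_ofReal.comp (Real.continuous_exp.comp (continuous_const.add continuous_id))
    have := (h2.tendsto 0).comp h1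
    simpa only [add_zero, Function.comp_def] using this
  exact ge_of_tendsto' htend fun k => h _ (by positivity)

lemma emp_isModel {𝔐 : Type*} [Fintype 𝔐] {n : ℕ} (hn : 1 ≤ n) (x : Fin n → 𝔐) :
    IsModel (fun m => (((Finset.univ.filter fun i => x i = m).card : ℝ)) / n) := by
  constructor
  · intro m; positivity
  · have hcard : ∑ m, ((Finset.univ.filter fun i => x i = m).card) = n := by
      rw [← Finset.card_eq_sum_card_fiberwise (fun i _ => Finset.mem_univ (x i))]
      simp
    rw [← Finset.sum_div]
    rw [show ∑ m, (((Finset.univ.filter fun i => x i = m).card : ℝ)) = (n : ℝ) by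
      rw [← Nat.cast_sum]; exact Nat.cast_inj.mpr hcard]
    rw [div_self (by positivity : (n:ℝ) ≠ 0)]

lemma prob_emp_mem_le {𝔐 : Type*} [Fintype 𝔐] [MeasurableSpace 𝔐] [MeasurableSingletonClass 𝔐]
    {Ω : Type*} [MeasurableSpace Ω] (μ : Measure Ω) [IsProbabilityMeasure μ]
    (n : ℕ) (hn : 1 ≤ n) (X : Fin n → Ω → 𝔐) (hXmeas : ∀ i, Measurable (X i))
    (hXindep : iIndepFun X μ)
    (Mt : 𝔐 → ℝ) (hMt : IsModel Mt) (hpos : ∀ m, 0 < Mt m)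
    (hXdist : ∀ i m, μ (X i ⁻¹' {m}) = ENNReal.ofReal (Mt m))
    (C : Set (𝔐 → ℝ)) (hconv : Convex ℝ C) (hmod : ∀ Q ∈ C, IsModel Q)
    (t : ℝ) (ht : ∀ Q ∈ C, t ≤ bootDist Q Mt) :
    μ {ω | (fun m => (((Finset.univ.filter fun i => X i ω = m).card : ℝ)) / n) ∈ C}
      ≤ ENNReal.ofReal (Real.exp (-(n : ℝ) * t)) := by
  have hn0 : (0:ℝ) < n := by exact_mod_cast hn
  -- reduce to the ε-approximate bound
  have main : ∀ ε : ℝ, 0 < ε →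
      μ {ω | (fun m => (((Finset.univ.filter fun i => X i ω = m).card : ℝ)) / n) ∈ C}
      ≤ ENNReal.ofReal (Real.exp (-(n : ℝ) * t + ε)) := by
    intro ε hε
    obtain ⟨h, hh0, hh1, hhQ⟩ := exists_certificate Mt hMt hpos C hconv hmod t ht (ε / n)
      (by positivity)
    set T : (Fin n → 𝔐) → 𝔐 → ℝ :=
      fun x m => (((Finset.univ.filter fun i => x i = m).card : ℝ)) / n with hT
    set bad : Finset (Fin n → 𝔐) := Finset.univ.filter (fun x => T x ∈ C) with hbad
    -- inclusion into a finite union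
    have hincl : {ω | (fun m => (((Finset.univ.filter fun i => X i ω = m).card : ℝ)) / n) ∈ C}
        ⊆ ⋃ x ∈ bad, ⋂ i, X i ⁻¹' {x i} := by
      intro ω hω
      have hxmem : (fun i => X i ω) ∈ (bad : Set (Fin n → 𝔐)) := by
        rw [hbad]
        simp only [Finset.coe_filter, Set.mem_setOf_eq, Finset.mem_univ, true_and]
        exact hω
      refine Set.mem_biUnion hxmem ?_
      simp
    have step1 : μ {ω | (fun m => (((Finset.univ.filter fun i => X i ω = m).card : ℝ)) / n) ∈ C}
        ≤ ∑ x ∈ bad, μ (⋂ i, X i ⁻¹' {x i}) :=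
      (measure_mono hincl).trans (measure_biUnion_finset_le bad _)
    -- independence: product form
    have hprod : ∀ x : Fin n → 𝔐, μ (⋂ i, X i ⁻¹' {x i})
        = ∏ i, ENNReal.ofReal (Mt (x i)) := by
      intro x
      rw [hXindep.meas_iInter fun i => ⟨{x i}, measurableSet_singleton _, rfl⟩]
      exact Finset.prod_congr rfl fun i _ => hXdist i (x i)
    -- per-tuple bound
    have hperx : ∀ x ∈ bad, ∏ i, ENNReal.ofReal (Mt (x i))
        ≤ ENNReal.ofReal (Real.exp (-(n : ℝ) * t + ε))
          * ∏ i, ENNReal.ofReal (Mt (x i) * h (x i)) := by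
      intro x hx
      have hxC : T x ∈ C := by
        rw [hbad] at hx
        exact (Finset.mem_filter.mp hx).2
      -- the log-sum bound
      have hlogsum : (n : ℝ) * t - ε ≤ ∑ i, Real.log (h (x i)) := by
        have e1 : ∑ i, Real.log (h (x i))
            = ∑ m, ∑ i ∈ Finset.univ.filter (fun i => x i = m), Real.log (h m) :=
          (Finset.sum_fiberwise_of_maps_to' (fun i _ => Finset.mem_univ (x i))
            (fun m => Real.log (h m))).symm
        have e2 : ∑ m, ∑ i ∈ Finset.univ.filter (fun i => x i = m), Real.log (h m)
            = ∑ m, ((Finset.univ.filter fun i => x i = m).card : ℝ) * Real.log (h m) := by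
          refine Finset.sum_congr rfl fun m _ => ?_
          rw [Finset.sum_const, nsmul_eq_mul]
        have e3 : ∑ m, ((Finset.univ.filter fun i => x i = m).card : ℝ) * Real.log (h m)
            = (n : ℝ) * ∑ m, T x m * Real.log (h m) := by
          rw [Finset.mul_sum]
          refine Finset.sum_congr rfl fun m _ => ?_
          have hTxm : T x m = (((Finset.univ.filter fun i => x i = m).card : ℝ)) / n := rfl
          rw [hTxm]
          field_simp
        have e4 := hhQ (T x) hxC
        have e5 : (n : ℝ) * (t - ε / n) ≤ (n : ℝ) * ∑ m, T x m * Real.log (h m) :=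
          mul_le_mul_of_nonneg_left e4 hn0.le
        rw [e1, e2, e3]
        have : (n : ℝ) * (t - ε / n) = (n : ℝ) * t - ε := by
          have hne : (n:ℝ) ≠ 0 := hn0.ne'
          field_simp
        linarith
      -- real inequality
      have hreal : ∏ i, Mt (x i)
          ≤ Real.exp (-(n : ℝ) * t + ε) * ∏ i, (Mt (x i) * h (x i)) := by
        have hprodpos : (0:ℝ) < ∏ i, Mt (x i) := Finset.prod_pos fun i _ => hpos (x i)
        have hhprod : ∏ i, (Mt (x i) * h (x i)) = (∏ i, Mt (x i)) * ∏ i, h (x i) :=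
          Finset.prod_mul_distrib
        have hexph : ∏ i, h (x i) = Real.exp (∑ i, Real.log (h (x i))) := by
          rw [Real.exp_sum]
          exact Finset.prod_congr rfl fun i _ => (Real.exp_log (hh0 (x i))).symm
        have hexpge : Real.exp ((n : ℝ) * t - ε) ≤ ∏ i, h (x i) := by
          rw [hexph]
          exact Real.exp_le_exp.2 hlogsum
        have : Real.exp (-(n : ℝ) * t + ε) * Real.exp ((n : ℝ) * t - ε) = 1 := by
          rw [← Real.exp_add]; norm_num
        calc ∏ i, Mt (x i) = (Real.exp (-(n : ℝ) * t + ε) * Real.exp ((n : ℝ) * t - ε))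
              * ∏ i, Mt (x i) := by rw [this]; ring
          _ ≤ Real.exp (-(n : ℝ) * t + ε) * ∏ i, (Mt (x i) * h (x i)) := by
              rw [hhprod]
              have k : Real.exp (-(n : ℝ) * t + ε) * Real.exp ((n : ℝ) * t - ε) * ∏ i, Mt (x i)
                  = (Real.exp (-(n : ℝ) * t + ε) * ∏ i, Mt (x i)) * Real.exp ((n : ℝ) * t - ε) := by
                ring
              rw [k]
              have k2 := mul_le_mul_of_nonneg_left hexpge
                (mul_nonneg (Real.exp_pos (-(n : ℝ) * t + ε)).le hprodpos.le)
              calc (Real.exp (-(n : ℝ) * t + ε) * ∏ i, Mt (x i)) * Real.exp ((n : ℝ) * t - ε)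
                  ≤ (Real.exp (-(n : ℝ) * t + ε) * ∏ i, Mt (x i)) * ∏ i, h (x i) := k2
                _ = Real.exp (-(n : ℝ) * t + ε) * ((∏ i, Mt (x i)) * ∏ i, h (x i)) := by ring
      -- transfer to ℝ≥0∞
      have l1 : ∏ i, ENNReal.ofReal (Mt (x i)) = ENNReal.ofReal (∏ i, Mt (x i)) :=
        (ENNReal.ofReal_prod_of_nonneg fun i _ => (hpos (x i)).le).symm
      have l2 : ∏ i, ENNReal.ofReal (Mt (x i) * h (x i))
          = ENNReal.ofReal (∏ i, (Mt (x i) * h (x i))) :=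
        (ENNReal.ofReal_prod_of_nonneg fun i _ =>
          mul_nonneg (hpos (x i)).le (hh0 (x i)).le).symm
      rw [l1, l2, ← ENNReal.ofReal_mul (Real.exp_pos _).le]
      exact ENNReal.ofReal_le_ofReal hreal
    -- sum over all tuples
    have step2 : ∑ x ∈ bad, μ (⋂ i, X i ⁻¹' {x i})
        ≤ ENNReal.ofReal (Real.exp (-(n : ℝ) * t + ε))
          * ∑ x ∈ bad, ∏ i, ENNReal.ofReal (Mt (x i) * h (x i)) := by
      rw [Finset.mul_sum]
      refine Finset.sum_le_sum fun x hx => ?_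
      rw [hprod x]
      exact hperx x hx
    have step3 : ∑ x ∈ bad, ∏ i, ENNReal.ofReal (Mt (x i) * h (x i)) ≤ 1 := by
      have hsub : ∑ x ∈ bad, ∏ i, ENNReal.ofReal (Mt (x i) * h (x i))
          ≤ ∑ x : Fin n → 𝔐, ∏ i, ENNReal.ofReal (Mt (x i) * h (x i)) :=
        Finset.sum_le_sum_of_subset (Finset.filter_subset _ _)
      have hswap : (∏ _i : Fin n, ∑ m, ENNReal.ofReal (Mt m * h m))
          = ∑ x : Fin n → 𝔐, ∏ i, ENNReal.ofReal (Mt (x i) * h (x i)) := by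
        rw [Finset.prod_univ_sum]
        rw [Fintype.piFinset_univ]
      have hone : ∑ m, ENNReal.ofReal (Mt m * h m) ≤ 1 := by
        rw [← ENNReal.ofReal_sum_of_nonneg fun m _ => mul_nonneg (hpos m).le (hh0 m).le]
        calc ENNReal.ofReal (∑ m, Mt m * h m) ≤ ENNReal.ofReal 1 :=
              ENNReal.ofReal_le_ofReal hh1
          _ = 1 := ENNReal.ofReal_one
      calc ∑ x ∈ bad, ∏ i, ENNReal.ofReal (Mt (x i) * h (x i))
          ≤ ∏ _i : Fin n, ∑ m, ENNReal.ofReal (Mt m * h m) := hsub.trans hswap.ge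
        _ ≤ ∏ _i : Fin n, 1 := Finset.prod_le_prod' fun i _ => hone
        _ = 1 := Finset.prod_const_one
    calc μ _ ≤ ∑ x ∈ bad, μ (⋂ i, X i ⁻¹' {x i}) := step1
      _ ≤ ENNReal.ofReal (Real.exp (-(n : ℝ) * t + ε))
          * ∑ x ∈ bad, ∏ i, ENNReal.ofReal (Mt (x i) * h (x i)) := step2
      _ ≤ ENNReal.ofReal (Real.exp (-(n : ℝ) * t + ε)) * 1 :=
          mul_le_mul_right step3 _
      _ = ENNReal.ofReal (Real.exp (-(n : ℝ) * t + ε)) := mul_one _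
  exact le_ofReal_exp_of_forall_pos main

lemma denom_pos_s7 {𝔐 : Type*} [Fintype 𝔐] (N : ℕ → Finset 𝔐) (w : 𝔐 → ℝ)
    (hw : ∀ m, 0 < w m) {n k j : ℕ} (hn : 1 ≤ n) (hk : 1 ≤ k) {Q : 𝔐 → ℝ}
    (hQ : IsModel Q) (hmem : MemNbhdModelSet N n k j Q) :
    0 < ∑ m ∈ N j, w m * Q m := by
  have hkn0 : (0:ℝ) < (k : ℝ) / n := by
    have h1 : (0:ℝ) < (k:ℝ) := by exact_mod_cast hk
    have h2 : (0:ℝ) < (n:ℝ) := by exact_mod_cast hn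
    positivity
  have hsum : 0 < ∑ m ∈ N j, Q m := lt_of_lt_of_le hkn0 hmem.1
  obtain ⟨m0, hm0, hm0pos⟩ : ∃ m ∈ N j, 0 < Q m := by
    by_contra hcon
    push_neg at hcon
    have : ∑ m ∈ N j, Q m ≤ 0 := Finset.sum_nonpos hcon
    linarith
  exact Finset.sum_pos' (fun m _ => mul_nonneg (hw m).le (hQ.1 m))
    ⟨m0, hm0, mul_pos (hw m0) hm0pos⟩

lemma convex_Cset {𝔐 : Type*} [Fintype 𝔐] (N : ℕ → Finset 𝔐) (w ℓ : 𝔐 → ℝ)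
    (hw : ∀ m, 0 < w m) (n k j : ℕ) (hn : 1 ≤ n) (hk : 1 ≤ k) (crnn : EReal) :
    Convex ℝ {Q : 𝔐 → ℝ | IsModel Q ∧ MemNbhdModelSet N n k j Q ∧
      crnn < ((nnCost N w ℓ j Q : ℝ) : EReal)} := by
  intro Q1 h1 Q2 h2 a b ha hb hab
  obtain ⟨h1M, h1mem, h1lt⟩ := h1
  obtain ⟨h2M, h2mem, h2lt⟩ := h2
  have happ : ∀ m, (a • Q1 + b • Q2) m = a * Q1 m + b * Q2 m := fun m => rfl
  have hQM : IsModel (a • Q1 + b • Q2) := by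
    constructor
    · intro m
      rw [happ]
      exact add_nonneg (mul_nonneg ha (h1M.1 m)) (mul_nonneg hb (h2M.1 m))
    · rw [Finset.sum_congr rfl fun m _ => happ m, Finset.sum_add_distrib,
        ← Finset.mul_sum, ← Finset.mul_sum, h1M.2, h2M.2]
      simpa using hab
  have expand : ∀ (f : 𝔐 → ℝ) (s : Finset 𝔐), ∑ m ∈ s, f m * (a • Q1 + b • Q2) m
      = a * ∑ m ∈ s, f m * Q1 m + b * ∑ m ∈ s, f m * Q2 m := by
    intro f s
    rw [Finset.mul_sum, Finset.mul_sum, ← Finset.sum_add_distrib]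
    refine Finset.sum_congr rfl fun m _ => ?_
    rw [happ]; ring
  have expand1 : ∀ s : Finset 𝔐, ∑ m ∈ s, (a • Q1 + b • Q2) m
      = a * ∑ m ∈ s, Q1 m + b * ∑ m ∈ s, Q2 m := by
    intro s
    rw [Finset.mul_sum, Finset.mul_sum, ← Finset.sum_add_distrib]
    refine Finset.sum_congr rfl fun m _ => ?_
    rw [happ]
  have hQmem : MemNbhdModelSet N n k j (a • Q1 + b • Q2) := by
    constructor
    · rw [expand1]
      calc (k:ℝ)/n = a * ((k:ℝ)/n) + b * ((k:ℝ)/n) := by rw [← add_mul, hab, one_mul]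
        _ ≤ _ := add_le_add (mul_le_mul_of_nonneg_left h1mem.1 ha)
            (mul_le_mul_of_nonneg_left h2mem.1 hb)
    · rw [expand1]
      calc a * ∑ m ∈ N (j-1), Q1 m + b * ∑ m ∈ N (j-1), Q2 m
          ≤ a * (((k:ℝ)-1)/n) + b * (((k:ℝ)-1)/n) :=
            add_le_add (mul_le_mul_of_nonneg_left h1mem.2 ha)
              (mul_le_mul_of_nonneg_left h2mem.2 hb)
        _ = ((k:ℝ)-1)/n := by rw [← add_mul, hab, one_mul]
  refine ⟨hQM, hQmem, ?_⟩
  induction crnn using EReal.rec with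
  | bot => exact EReal.bot_lt_coe _
  | top => exact absurd h1lt (not_top_lt)
  | coe c =>
    rw [EReal.coe_lt_coe_iff] at h1lt h2lt ⊢
    have hB1 : 0 < ∑ m ∈ N j, w m * Q1 m := denom_pos_s7 N w hw hn hk h1M h1mem
    have hB2 : 0 < ∑ m ∈ N j, w m * Q2 m := denom_pos_s7 N w hw hn hk h2M h2mem
    have hB : 0 < ∑ m ∈ N j, w m * (a • Q1 + b • Q2) m :=
      denom_pos_s7 N w hw hn hk hQM hQmem
    have hA1 : c * ∑ m ∈ N j, w m * Q1 m < ∑ m ∈ N j, w m * ℓ m * Q1 m := by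
      have := h1lt
      rw [nnCost, lt_div_iff₀ hB1] at this
      linarith
    have hA2 : c * ∑ m ∈ N j, w m * Q2 m < ∑ m ∈ N j, w m * ℓ m * Q2 m := by
      have := h2lt
      rw [nnCost, lt_div_iff₀ hB2] at this
      linarith
    rw [nnCost, lt_div_iff₀ hB]
    have eA : ∑ m ∈ N j, w m * ℓ m * (a • Q1 + b • Q2) m
        = a * ∑ m ∈ N j, w m * ℓ m * Q1 m + b * ∑ m ∈ N j, w m * ℓ m * Q2 m :=
      expand (fun m => w m * ℓ m) (N j)
    have eB : ∑ m ∈ N j, w m * (a • Q1 + b • Q2) m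
        = a * ∑ m ∈ N j, w m * Q1 m + b * ∑ m ∈ N j, w m * Q2 m :=
      expand w (N j)
    rw [eA, eB]
    rcases ha.eq_or_lt with ha0 | ha0
    · have hb1 : b = 1 := by linarith
      rw [← ha0, hb1]
      simpa using hA2
    · rcases hb.eq_or_lt with hb0 | hb0
      · have ha1 : a = 1 := by linarith
        rw [← hb0, ha1]
        simpa using hA1
      · have i1 : c * (a * ∑ m ∈ N j, w m * Q1 m) < a * ∑ m ∈ N j, w m * ℓ m * Q1 m := by
          have := mul_lt_mul_of_pos_left hA1 ha0
          linarith [this]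
        have i2 : c * (b * ∑ m ∈ N j, w m * Q2 m) < b * ∑ m ∈ N j, w m * ℓ m * Q2 m := by
          have := mul_lt_mul_of_pos_left hA2 hb0
          linarith [this]
        nlinarith [i1, i2]

/-- **bootstrap performance of the nearest-neighbors formulation.**
The bootstrap-robust nearest-neighbors cost with radius `r` disappoints on
bootstrap data resampled i.i.d. from the training model `M_t` with probability
at most `∑_{j=1}^{J} exp(−n · max{r, r*_j})`. -/
theorem bootstrap_robust_nearest_neighbors_disappointment
    {𝔐 : Type*} [Fintype 𝔐] [Nonempty 𝔐]
    [MeasurableSpace 𝔐] [MeasurableSingletonClass 𝔐]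
    (w ℓ : 𝔐 → ℝ) (hw : ∀ m, 0 < w m)
    (Mt : 𝔐 → ℝ) (hMt : IsModel Mt) (hMtpos : ∀ m, 0 < Mt m)
    (n k : ℕ) (hn : 1 ≤ n) (hk : 1 ≤ k) (hkn : k ≤ n)
    (hMtemp : ∀ m, ∃ c : ℕ, (n : ℝ) * Mt m = (c : ℝ))
    (J : ℕ) (N : ℕ → Finset 𝔐)
    (hN0 : N 0 = ∅) (hNJ : N J = Finset.univ)
    (hNcard : ∀ j ≤ J, (N j).card = j)
    (hNmono : ∀ j < J, N j ⊆ N (j + 1))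
    (r : ℝ) (hr : 0 ≤ r)
    (rstar : ℕ → ℝ≥0∞)
    (hrstar : ∀ j, rstar j =
        ⨅ M ∈ {M : 𝔐 → ℝ | IsModel M ∧ MemNbhdModelSet N n k j M},
          ENNReal.ofReal (bootDist M Mt))
    (crnn : EReal)
    (hcrnn : crnn = ⨆ j ∈ Finset.Icc 1 J,
        sSup {v : EReal | ∃ M : 𝔐 → ℝ, IsModel M ∧ MemNbhdModelSet N n k j M ∧
          bootDist M Mt ≤ r ∧ v = ((nnCost N w ℓ j M : ℝ) : EReal)})
    {Ω : Type*} [MeasurableSpace Ω] (μ : Measure Ω) [IsProbabilityMeasure μ]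
    (X : Fin n → Ω → 𝔐) (hXmeas : ∀ i, Measurable (X i))
    (hXindep : iIndepFun X μ)
    (hXdist : ∀ i m, μ (X i ⁻¹' {m}) = ENNReal.ofReal (Mt m)) :
    μ {ω | ∃ j ∈ Finset.Icc 1 J,
        MemNbhdModelSet N n k j
          (fun m => ((Finset.univ.filter fun i => X i ω = m).card : ℝ) / n) ∧
        crnn < ((nnCost N w ℓ j
          (fun m => ((Finset.univ.filter fun i => X i ω = m).card : ℝ) / n) : ℝ) : EReal)}
      ≤ ∑ j ∈ Finset.Icc 1 J, expNeg ((n : ℝ≥0∞) * max (ENNReal.ofReal r) (rstar j)) := by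
  have hsub : {ω | ∃ j ∈ Finset.Icc 1 J,
      MemNbhdModelSet N n k j
        (fun m => ((Finset.univ.filter fun i => X i ω = m).card : ℝ) / n) ∧
      crnn < ((nnCost N w ℓ j
        (fun m => ((Finset.univ.filter fun i => X i ω = m).card : ℝ) / n) : ℝ) : EReal)}
      ⊆ ⋃ j ∈ Finset.Icc 1 J,
        {ω | (fun m => ((Finset.univ.filter fun i => X i ω = m).card : ℝ) / n) ∈
          {Q : 𝔐 → ℝ | IsModel Q ∧ MemNbhdModelSet N n k j Q ∧
            crnn < ((nnCost N w ℓ j Q : ℝ) : EReal)}} := by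
    intro ω hω
    obtain ⟨j, hj, hmem, hlt⟩ := hω
    simp only [Set.mem_iUnion]
    exact ⟨j, hj, emp_isModel hn _, hmem, hlt⟩
  refine (measure_mono hsub).trans ?_
  refine (measure_biUnion_finset_le _ _).trans ?_
  refine Finset.sum_le_sum fun j hj => ?_
  set Cj : Set (𝔐 → ℝ) := {Q : 𝔐 → ℝ | IsModel Q ∧ MemNbhdModelSet N n k j Q ∧
      crnn < ((nnCost N w ℓ j Q : ℝ) : EReal)} with hCj
  rcases Cj.eq_empty_or_nonempty with hempty | ⟨Q0, hQ0⟩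
  · rw [hempty]
    simp only [Set.mem_empty_iff_false, Set.setOf_false, measure_empty]
    exact zero_le
  · have hrs0 : rstar j ≤ ENNReal.ofReal (bootDist Q0 Mt) := by
      rw [hrstar j]
      exact iInf₂_le Q0 ⟨hQ0.1, hQ0.2.1⟩
    have hTne : (max (ENNReal.ofReal r) (rstar j)) ≠ ⊤ :=
      (max_lt ENNReal.ofReal_lt_top (lt_of_le_of_lt hrs0 ENNReal.ofReal_lt_top)).ne
    set t : ℝ := (max (ENNReal.ofReal r) (rstar j)).toReal with htdef
    have ht : ∀ Q ∈ Cj, t ≤ bootDist Q Mt := by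
      intro Q hQmem
      obtain ⟨hQM, hQnb, hQlt⟩ := hQmem
      have hD0 : 0 ≤ bootDist Q Mt := bootDist_nonneg hQM hMt hMtpos
      have hge_r : r ≤ bootDist Q Mt := by
        by_contra hcon
        push_neg at hcon
        have h1 : ((nnCost N w ℓ j Q : ℝ) : EReal) ≤
            sSup {v : EReal | ∃ M : 𝔐 → ℝ, IsModel M ∧ MemNbhdModelSet N n k j M ∧
              bootDist M Mt ≤ r ∧ v = ((nnCost N w ℓ j M : ℝ) : EReal)} :=
          le_sSup ⟨Q, hQM, hQnb, hcon.le, rfl⟩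
        have h2 : sSup {v : EReal | ∃ M : 𝔐 → ℝ, IsModel M ∧ MemNbhdModelSet N n k j M ∧
            bootDist M Mt ≤ r ∧ v = ((nnCost N w ℓ j M : ℝ) : EReal)} ≤ crnn := by
          rw [hcrnn]
          exact le_iSup₂ (f := fun (j : ℕ) (_ : j ∈ Finset.Icc 1 J) =>
            sSup {v : EReal | ∃ M : 𝔐 → ℝ, IsModel M ∧ MemNbhdModelSet N n k j M ∧
              bootDist M Mt ≤ r ∧ v = ((nnCost N w ℓ j M : ℝ) : EReal)}) j hj
        exact absurd (h1.trans h2) (not_le.mpr hQlt)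
      have hrsQ : rstar j ≤ ENNReal.ofReal (bootDist Q Mt) := by
        rw [hrstar j]
        exact iInf₂_le Q ⟨hQM, hQnb⟩
      have hmax : max (ENNReal.ofReal r) (rstar j) ≤ ENNReal.ofReal (bootDist Q Mt) :=
        max_le (ENNReal.ofReal_le_ofReal hge_r) hrsQ
      exact ENNReal.toReal_le_of_le_ofReal hD0 hmax
    have hconv : Convex ℝ Cj := convex_Cset N w ℓ hw n k j hn hk crnn
    have hmod : ∀ Q ∈ Cj, IsModel Q := fun Q hQ => hQ.1
    have hb := prob_emp_mem_le μ n hn X hXmeas hXindep Mt hMt hMtpos hXdist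
      Cj hconv hmod t ht
    have hmulne : (n : ℝ≥0∞) * max (ENNReal.ofReal r) (rstar j) ≠ ⊤ :=
      ENNReal.mul_ne_top (ENNReal.natCast_ne_top n) hTne
    rw [expNeg, if_neg hmulne, ENNReal.toReal_mul, ENNReal.toReal_natCast, ← neg_mul]
    exact hb
end

section
/- Let r > 0. Then the bootstrap-robust Nadaraya–Watson value sup{ Σ_{m∈𝔐} w(m)·ℓ(m)·P(m) : s > 0, P : 𝔐 → [0,∞), Σ_{m∈𝔐} P(m) = s, Σ_{m∈𝔐} w(m)·P(m) = 1, Σ_{m∈𝔐} P(m)·log(P(m)/(s·M_t(m))) ≤ s·r } equals the dual value inf{ α ∈ ℝ : there exists ν > 0 such that ν·log( Σ_{m∈𝔐} exp((ℓ(m) − α)·w(m)/ν)·M_t(m) ) + r·ν ≤ 0 }. -/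
open Finset
open Classical

lemma aux_log {a b : ℝ} (ha : 0 ≤ a) (hb : 0 < b) :
    a - b ≤ a * Real.log (a / b) := by
  rcases ha.eq_or_lt with h | h
  · rw [← h]
    simpa using hb.le
  · have h1 : Real.log (b / a) ≤ b / a - 1 := Real.log_le_sub_one_of_pos (div_pos hb h)
    have h2 : Real.log (a / b) = -Real.log (b / a) := by
      rw [← Real.log_inv, inv_div]
    have h3 : a * (b / a) = b := by field_simp
    nlinarith

/-- **dual representation of the bootstrap robust
Nadaraya–Watson cost.** For a strictly positive robustness radius `r`, the
value of the entropy-constrained primal program equals the value of its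
Lagrangian dual. -/
theorem bootstrap_robust_nadaraya_watson_duality
    {𝔐 : Type*} [Fintype 𝔐] [Nonempty 𝔐]
    (w ℓ : 𝔐 → ℝ) (hw : ∀ m, 0 < w m)
    (Mt : 𝔐 → ℝ) (hMt : (∀ m, 0 ≤ Mt m) ∧ ∑ m, Mt m = 1)
    (hMtpos : ∀ m, 0 < Mt m)
    (r : ℝ) (hr : 0 < r) :
    sSup {v : ℝ | ∃ s : ℝ, 0 < s ∧ ∃ P : 𝔐 → ℝ, (∀ m, 0 ≤ P m) ∧
        (∑ m, P m) = s ∧ (∑ m, w m * P m) = 1 ∧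
        (∑ m, if P m = 0 then 0 else P m * Real.log (P m / (s * Mt m))) ≤ s * r ∧
        v = ∑ m, w m * ℓ m * P m} =
    sInf {α : ℝ | ∃ ν : ℝ, 0 < ν ∧
        ν * Real.log (∑ m, Real.exp ((ℓ m - α) * w m / ν) * Mt m) + r * ν ≤ 0} := by
  classical
  obtain ⟨hMt0, hMt1⟩ := hMt
  obtain ⟨mw, -, hmw⟩ := Finset.exists_min_image Finset.univ w ⟨Classical.arbitrary 𝔐, Finset.mem_univ _⟩
  have hwmin : 0 < w mw := hw mw
  obtain ⟨ml, -, hml⟩ := Finset.exists_max_image Finset.univ ℓ ⟨Classical.arbitrary 𝔐, Finset.mem_univ _⟩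
  set S : Set ℝ := {v : ℝ | ∃ s : ℝ, 0 < s ∧ ∃ P : 𝔐 → ℝ, (∀ m, 0 ≤ P m) ∧
      (∑ m, P m) = s ∧ (∑ m, w m * P m) = 1 ∧
      (∑ m, if P m = 0 then 0 else P m * Real.log (P m / (s * Mt m))) ≤ s * r ∧
      v = ∑ m, w m * ℓ m * P m} with hSdef
  set D : Set ℝ := {α : ℝ | ∃ ν : ℝ, 0 < ν ∧
      ν * Real.log (∑ m, Real.exp ((ℓ m - α) * w m / ν) * Mt m) + r * ν ≤ 0} with hDdef
  -- construction of primal points from probability vectors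
  have primal_mem : ∀ Q : 𝔐 → ℝ, (∀ m, 0 < Q m) → (∑ m, Q m) = 1 →
      (∑ m, Q m * Real.log (Q m / Mt m)) ≤ r →
      (∑ m, w m * ℓ m * Q m) / (∑ m, w m * Q m) ∈ S := by
    intro Q hQpos hQ1 hQKL
    have hwQ : 0 < ∑ m, w m * Q m :=
      Finset.sum_pos (fun m _ => mul_pos (hw m) (hQpos m)) Finset.univ_nonempty
    set k : ℝ := (∑ m, w m * Q m)⁻¹ with hk
    have hkpos : 0 < k := inv_pos.2 hwQ
    refine ⟨k, hkpos, fun m => k * Q m,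
      fun m => le_of_lt (mul_pos hkpos (hQpos m)), ?_, ?_, ?_, ?_⟩
    · rw [← Finset.mul_sum, hQ1, mul_one]
    · have h1 : ∑ m, w m * (k * Q m) = k * ∑ m, w m * Q m := by
        rw [Finset.mul_sum]
        exact Finset.sum_congr rfl (fun m _ => by ring)
      rw [h1, hk, inv_mul_cancel₀ hwQ.ne']
    · have h1 : ∀ m ∈ Finset.univ, (if k * Q m = 0 then 0 else
          (k * Q m) * Real.log ((k * Q m) / (k * Mt m)))
          = k * (Q m * Real.log (Q m / Mt m)) := by
        intro m _
        rw [if_neg (mul_pos hkpos (hQpos m)).ne',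
          mul_div_mul_left _ _ hkpos.ne']
        ring
      rw [Finset.sum_congr rfl h1, ← Finset.mul_sum]
      exact mul_le_mul_of_nonneg_left hQKL hkpos.le
    · have h1 : ∑ m, w m * ℓ m * (k * Q m) = k * ∑ m, w m * ℓ m * Q m := by
        rw [Finset.mul_sum]
        exact Finset.sum_congr rfl (fun m _ => by ring)
      rw [h1, hk, div_eq_mul_inv, mul_comm]
  -- weak duality
  have weak : ∀ v ∈ S, ∀ α ∈ D, v ≤ α := by
    rintro v ⟨s, hs, P, hP, hPsum, hPw, hPent, rfl⟩ α ⟨ν, hν, hdual⟩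
    set Z := ∑ m, Real.exp ((ℓ m - α) * w m / ν) * Mt m with hZ
    have hZpos : 0 < Z :=
      Finset.sum_pos (fun m _ => mul_pos (Real.exp_pos _) (hMtpos m)) Finset.univ_nonempty
    have hlogZ : Real.log Z ≤ -r := by nlinarith
    have key : ∀ m ∈ Finset.univ,
        P m - s * Mt m * Real.exp ((ℓ m - α) * w m / ν) / Z ≤
        (if P m = 0 then 0 else P m * Real.log (P m / (s * Mt m)))
          - P m * ((ℓ m - α) * w m / ν) + P m * Real.log Z := by
      intro m _
      have hbp : 0 < s * Mt m * Real.exp ((ℓ m - α) * w m / ν) / Z :=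
        div_pos (mul_pos (mul_pos hs (hMtpos m)) (Real.exp_pos _)) hZpos
      by_cases h0 : P m = 0
      · simp only [h0, if_pos, zero_sub, zero_mul, sub_zero, zero_add, if_true]
        simpa using hbp.le
      · have hp : 0 < P m := (hP m).lt_of_ne' h0
        have hsM : 0 < s * Mt m := mul_pos hs (hMtpos m)
        have hb := hbp
        have haux := aux_log (hP m) hb
        rw [if_neg h0]
        have hlogeq : Real.log (P m / (s * Mt m * Real.exp ((ℓ m - α) * w m / ν) / Z))
            = Real.log (P m / (s * Mt m)) - ((ℓ m - α) * w m / ν) + Real.log Z := by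
          rw [Real.log_div h0 hb.ne', Real.log_div h0 hsM.ne',
            Real.log_div (mul_pos hsM (Real.exp_pos _)).ne' hZpos.ne',
            Real.log_mul hsM.ne' (Real.exp_pos _).ne', Real.log_exp]
          ring
        rw [hlogeq] at haux
        nlinarith
    have hsum := Finset.sum_le_sum key
    have hsumb : ∑ m, (P m - s * Mt m * Real.exp ((ℓ m - α) * w m / ν) / Z) = 0 := by
      rw [Finset.sum_sub_distrib, hPsum]
      have h1 : ∑ m, s * Mt m * Real.exp ((ℓ m - α) * w m / ν) / Z
          = s / Z * ∑ m, Real.exp ((ℓ m - α) * w m / ν) * Mt m := by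
        rw [Finset.mul_sum]
        exact Finset.sum_congr rfl (fun m _ => by ring)
      rw [h1, ← hZ, div_mul_cancel₀ _ hZpos.ne', sub_self]
    have hsplit : ∑ m, ((if P m = 0 then 0 else P m * Real.log (P m / (s * Mt m)))
          - P m * ((ℓ m - α) * w m / ν) + P m * Real.log Z)
        = (∑ m, if P m = 0 then 0 else P m * Real.log (P m / (s * Mt m)))
          - (∑ m, P m * ((ℓ m - α) * w m / ν)) + s * Real.log Z := by
      rw [Finset.sum_add_distrib, Finset.sum_sub_distrib, ← Finset.sum_mul, hPsum]
    rw [hsumb, hsplit] at hsum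
    have hPt' : ∑ m, P m * ((ℓ m - α) * w m / ν) ≤ 0 := by nlinarith
    have hid : ν * (∑ m, P m * ((ℓ m - α) * w m / ν))
        = (∑ m, w m * ℓ m * P m) - α * (∑ m, w m * P m) := by
      rw [Finset.mul_sum, Finset.mul_sum, ← Finset.sum_sub_distrib]
      refine Finset.sum_congr rfl (fun m _ => ?_)
      field_simp
    rw [hPw, mul_one] at hid
    nlinarith
  -- S is nonempty
  have hSne : S.Nonempty := by
    have h1 : (∑ m, Mt m * Real.log (Mt m / Mt m)) ≤ r := by
      have h2 : ∀ m ∈ Finset.univ, Mt m * Real.log (Mt m / Mt m) = 0 := by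
        intro m _
        rw [div_self (hMtpos m).ne', Real.log_one, mul_zero]
      rw [Finset.sum_congr rfl h2, Finset.sum_const_zero]
      exact hr.le
    exact ⟨_, primal_mem Mt hMtpos hMt1 h1⟩
  -- D is nonempty
  have hDne : D.Nonempty := by
    have hν0 : 0 < w mw / r := div_pos hwmin hr
    refine ⟨ℓ ml + 1, w mw / r, hν0, ?_⟩
    set Z := ∑ m, Real.exp ((ℓ m - (ℓ ml + 1)) * w m / (w mw / r)) * Mt m with hZ
    have hZpos : 0 < Z :=
      Finset.sum_pos (fun m _ => mul_pos (Real.exp_pos _) (hMtpos m)) Finset.univ_nonempty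
    have hZle : Z ≤ Real.exp (-r) := by
      rw [hZ]
      calc ∑ m, Real.exp ((ℓ m - (ℓ ml + 1)) * w m / (w mw / r)) * Mt m
          ≤ ∑ m, Real.exp (-r) * Mt m := by
            refine Finset.sum_le_sum (fun m _ => ?_)
            refine mul_le_mul_of_nonneg_right ?_ (hMt0 m)
            refine Real.exp_le_exp.2 ?_
            have h1 : ℓ m - (ℓ ml + 1) ≤ -1 := by
              have := hml m (Finset.mem_univ m)
              linarith
            have h2 : (ℓ m - (ℓ ml + 1)) * w m ≤ -w m := by nlinarith [hw m]
            have h3 : -w m ≤ -w mw := by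
              have := hmw m (Finset.mem_univ m)
              linarith
            have h4 : (ℓ m - (ℓ ml + 1)) * w m / (w mw / r) ≤ -w mw / (w mw / r) :=
              (div_le_div_iff_of_pos_right hν0).2 (le_trans h2 h3)
            have h5 : -w mw / (w mw / r) = -r := by
              field_simp
            linarith [h4, h5.le]
        _ = Real.exp (-r) := by rw [← Finset.mul_sum, hMt1, mul_one]
    have hlogZ : Real.log Z ≤ -r := by
      calc Real.log Z ≤ Real.log (Real.exp (-r)) :=
            Real.log_le_log hZpos hZle
        _ = -r := Real.log_exp _
    nlinarith
  obtain ⟨α0, hα0D⟩ := hDne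
  obtain ⟨v0, hv0S⟩ := hSne
  have hSbdd : BddAbove S := ⟨α0, fun v hv => weak v hv α0 hα0D⟩
  have hDbdd : BddBelow D := ⟨v0, fun α hα => weak v0 hv0S α hα⟩
  apply le_antisymm
  · exact csSup_le ⟨v0, hv0S⟩
      (fun v hv => le_csInf ⟨α0, hα0D⟩ (fun α hα => weak v hv α hα))
  · by_contra hcon
    push_neg at hcon
    set α : ℝ := (sSup S + sInf D) / 2 with hαdef
    have hα1 : sSup S < α := by
      rw [hαdef]
      linarith
    have hα2 : α < sInf D := by
      rw [hαdef]
      linarith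
    have hαD : α ∈ D := by
      by_contra hnot
      rw [hDdef, Set.mem_setOf_eq] at hnot
      push_neg at hnot
      -- set-up: β-parametrisation
      set c : 𝔐 → ℝ := fun m => (ℓ m - α) * w m with hc
      set φ : ℝ → ℝ := fun β => ∑ m, Real.exp (β * c m) * Mt m with hφ
      have hφpos : ∀ β, 0 < φ β := fun β =>
        Finset.sum_pos (fun m _ => mul_pos (Real.exp_pos _) (hMtpos m)) Finset.univ_nonempty
      have hinfeas : ∀ β, 0 < β → -r < Real.log (φ β) := by
        intro β hβ
        have h1 := hnot β⁻¹ (inv_pos.2 hβ)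
        have heq : (∑ m, Real.exp ((ℓ m - α) * w m / β⁻¹) * Mt m) = φ β := by
          rw [hφ]
          refine Finset.sum_congr rfl (fun m _ => ?_)
          have : (ℓ m - α) * w m / β⁻¹ = β * c m := by
            rw [div_eq_mul_inv, inv_inv, hc]
            ring
          rw [this]
        rw [heq] at h1
        by_contra hcontra
        push_neg at hcontra
        have hβi : 0 < β⁻¹ := inv_pos.2 hβ
        nlinarith
      set KLf : ℝ → ℝ := fun β =>
        β * ((∑ m, c m * (Real.exp (β * c m) * Mt m)) / φ β) - Real.log (φ β) with hKL
      have hφcont : Continuous φ := by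
        rw [hφ]
        exact continuous_finset_sum _ (fun m _ =>
          ((Real.continuous_exp.comp (continuous_id.mul continuous_const)).mul continuous_const))
      have hnumcont : Continuous fun β => ∑ m, c m * (Real.exp (β * c m) * Mt m) :=
        continuous_finset_sum _ (fun m _ => continuous_const.mul
          ((Real.continuous_exp.comp (continuous_id.mul continuous_const)).mul continuous_const))
      have hKLcont : Continuous KLf := by
        rw [hKL]
        exact (continuous_id.mul (hnumcont.div hφcont (fun β => (hφpos β).ne'))).sub
          (hφcont.log (fun β => (hφpos β).ne'))
      have hφ0 : φ 0 = 1 := by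
        rw [hφ]
        simp [hMt1]
      have hKL0 : KLf 0 = 0 := by
        rw [hKL]
        simp [hφ0]
      -- the sum identity : β * ∑ c·Q = KLf β + log (φ β)
      have hBc : ∀ β, β * (∑ m, c m * (Real.exp (β * c m) * Mt m / φ β))
          = KLf β + Real.log (φ β) := by
        intro β
        have h1 : ∑ m, c m * (Real.exp (β * c m) * Mt m / φ β)
            = (∑ m, c m * (Real.exp (β * c m) * Mt m)) / φ β := by
          rw [Finset.sum_div]
          exact Finset.sum_congr rfl (fun m _ => (mul_div_assoc _ _ _).symm)
        rw [h1, hKL]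
        ring
      -- KL representation
      have hKLrep : ∀ β, (∑ m, (Real.exp (β * c m) * Mt m / φ β) *
          Real.log ((Real.exp (β * c m) * Mt m / φ β) / Mt m)) = KLf β := by
        intro β
        have h1 : ∀ m ∈ Finset.univ, (Real.exp (β * c m) * Mt m / φ β) *
            Real.log ((Real.exp (β * c m) * Mt m / φ β) / Mt m)
            = β * (c m * (Real.exp (β * c m) * Mt m / φ β))
              - Real.log (φ β) * (Real.exp (β * c m) * Mt m / φ β) := by
          intro m _
          have hx : (Real.exp (β * c m) * Mt m / φ β) / Mt m = Real.exp (β * c m) / φ β := by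
            rw [div_div, mul_comm (φ β) (Mt m), ← div_div,
              mul_div_cancel_right₀ _ (hMtpos m).ne']
          rw [hx, Real.log_div (Real.exp_pos _).ne' (hφpos β).ne', Real.log_exp]
          ring
        rw [Finset.sum_congr rfl h1, Finset.sum_sub_distrib, ← Finset.mul_sum, ← Finset.mul_sum]
        have hQ1 : ∑ m, Real.exp (β * c m) * Mt m / φ β = 1 := by
          rw [← Finset.sum_div, hφ]
          exact div_self (hφpos β).ne'
        rw [hQ1, hBc β, mul_one]
        ring
      have hKLnn : ∀ β, 0 ≤ KLf β := by
        intro β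
        have hQ1 : ∑ m, Real.exp (β * c m) * Mt m / φ β = 1 := by
          rw [← Finset.sum_div, hφ]
          exact div_self (hφpos β).ne'
        have h1 : ∀ m ∈ Finset.univ, Real.exp (β * c m) * Mt m / φ β - Mt m ≤
            (Real.exp (β * c m) * Mt m / φ β) *
              Real.log ((Real.exp (β * c m) * Mt m / φ β) / Mt m) := fun m _ =>
          aux_log (le_of_lt (div_pos (mul_pos (Real.exp_pos _) (hMtpos m)) (hφpos β))) (hMtpos m)
        have h2 := Finset.sum_le_sum h1
        rw [Finset.sum_sub_distrib, hQ1, hMt1, sub_self, hKLrep β] at h2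
        exact h2
      -- constructing primal points from a tilted measure
      have build : ∀ β : ℝ, 0 < β → KLf β ≤ r → ∃ T : ℝ, 0 < T ∧ w mw ≤ T ∧
          α + (∑ m, c m * (Real.exp (β * c m) * Mt m / φ β)) / T ∈ S := by
        intro β hβ hKLr
        set Q : 𝔐 → ℝ := fun m => Real.exp (β * c m) * Mt m / φ β with hQ
        have hQpos : ∀ m, 0 < Q m := fun m =>
          div_pos (mul_pos (Real.exp_pos _) (hMtpos m)) (hφpos β)
        have hQ1 : ∑ m, Q m = 1 := by
          rw [hQ, ← Finset.sum_div, hφ]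
          exact div_self (hφpos β).ne'
        have hQKL : (∑ m, Q m * Real.log (Q m / Mt m)) ≤ r := by
          rw [hQ]
          rw [hKLrep β]
          exact hKLr
        have hmem := primal_mem Q hQpos hQ1 hQKL
        have hT : 0 < ∑ m, w m * Q m :=
          Finset.sum_pos (fun m _ => mul_pos (hw m) (hQpos m)) Finset.univ_nonempty
        refine ⟨∑ m, w m * Q m, hT, ?_, ?_⟩
        · calc w mw = w mw * ∑ m, Q m := by rw [hQ1, mul_one]
            _ = ∑ m, w mw * Q m := by rw [Finset.mul_sum]
            _ ≤ ∑ m, w m * Q m := Finset.sum_le_sum (fun m _ =>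
                mul_le_mul_of_nonneg_right (hmw m (Finset.mem_univ m)) (hQpos m).le)
        · have hsub : (∑ m, c m * Q m) = (∑ m, w m * ℓ m * Q m) - α * (∑ m, w m * Q m) := by
            rw [Finset.mul_sum, ← Finset.sum_sub_distrib]
            refine Finset.sum_congr rfl (fun m _ => ?_)
            simp only [hc]
            ring
          have hval : α + (∑ m, c m * Q m) / (∑ m, w m * Q m)
              = (∑ m, w m * ℓ m * Q m) / (∑ m, w m * Q m) := by
            rw [hsub]
            field_simp
            ring
          rw [hval]
          exact hmem
      -- now derive α ≤ sSup S, a contradiction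
      have hαle : α ≤ sSup S := by
        by_cases hex : ∃ B, 0 < B ∧ r ≤ KLf B
        · obtain ⟨B, hB, hrB⟩ := hex
          have hIcc : r ∈ Set.Icc (KLf 0) (KLf B) := by
            rw [hKL0]
            exact ⟨hr.le, hrB⟩
          obtain ⟨β, hβmem, hβeq⟩ := intermediate_value_Icc hB.le hKLcont.continuousOn hIcc
          have hβpos : 0 < β := by
            rcases hβmem.1.eq_or_lt with h | h
            · exfalso
              rw [← h, hKL0] at hβeq
              exact hr.ne hβeq
            · exact h
          obtain ⟨T, hT, hwT, hmem⟩ := build β hβpos (le_of_eq hβeq)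
          have hpos : 0 < ∑ m, c m * (Real.exp (β * c m) * Mt m / φ β) := by
            have h1 := hBc β
            rw [hβeq] at h1
            have h2 := hinfeas β hβpos
            nlinarith
          have hv := le_csSup hSbdd hmem
          have : α < α + (∑ m, c m * (Real.exp (β * c m) * Mt m / φ β)) / T := by
            have := div_pos hpos hT
            linarith
          linarith
        · push_neg at hex
          refine le_of_forall_pos_le_add (fun ε hε => ?_)
          set β : ℝ := r / (ε * w mw) with hβdef
          have hβpos : 0 < β := div_pos hr (mul_pos hε hwmin)
          have hKLr : KLf β ≤ r := (hex β hβpos).le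
          obtain ⟨T, hT, hwT, hmem⟩ := build β hβpos hKLr
          have hBlb : -r / β ≤ ∑ m, c m * (Real.exp (β * c m) * Mt m / φ β) := by
            have h1 := hBc β
            have h2 := hinfeas β hβpos
            have h3 := hKLnn β
            have h4 : -r ≤ β * (∑ m, c m * (Real.exp (β * c m) * Mt m / φ β)) := by
              rw [h1]
              linarith
            rw [mul_comm] at h4
            exact (div_le_iff₀ hβpos).2 h4
          have hv := le_csSup hSbdd hmem
          -- bound the correction term
          have hb1 : -r / β / T ≤ (∑ m, c m * (Real.exp (β * c m) * Mt m / φ β)) / T :=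
            (div_le_div_iff_of_pos_right hT).2 hBlb
          have hrβ : r / β = ε * w mw := by
            rw [hβdef]
            field_simp
          have hb2 : r / β / T ≤ ε := by
            calc r / β / T ≤ r / β / w mw :=
                  div_le_div_of_nonneg_left (div_pos hr hβpos).le hwmin hwT
              _ = ε := by rw [hrβ, mul_div_assoc, div_self hwmin.ne', mul_one]
          have hneg : -r / β / T = -(r / β / T) := by ring
          linarith
      linarith
    have := csInf_le hDbdd hαD
    linarith
end

section
/- Let Z ⊆ ℝ^p be convex, let L : Z × 𝒴 → ℝ be such that z ↦ L(z, y) is convex on Z for every label y appearing in 𝔐, let r ≥ 0, and let D be a model distance function. Then the robust Nadaraya–Watson cost z ↦ sup{ (Σ_{(x,y)∈𝔐} w(x,y)·L(z,y)·M(x,y)) / (Σ_{(x,y)∈𝔐} w(x,y)·M(x,y)) : M a model on 𝔐 with D(M, M_t) ≤ r } is a real-valued convex function on Z. -/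
open Finset

/-- With a loss `L(z, y)` convex in the decision `z`, the
robust Nadaraya–Watson cost
`z ↦ sup { c(z, M) : D(M, M_t) ≤ r }` is a (real-valued) convex function of the
decision on the convex feasible set `Z`. -/
theorem robust_nadaraya_watson_cost_convexOn
    {𝒳 𝒴 : Type*} [Fintype 𝒳] [Fintype 𝒴] [Nonempty 𝒳] [Nonempty 𝒴]
    {p : ℕ} (Z : Set (Fin p → ℝ)) (hZ : Convex ℝ Z)
    (L : (Fin p → ℝ) → 𝒴 → ℝ) (hL : ∀ y, ConvexOn ℝ Z (fun z => L z y))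
    (w : 𝒳 × 𝒴 → ℝ) (hw : ∀ m, 0 < w m)
    (Mt : 𝒳 × 𝒴 → ℝ) (hMt : IsModel Mt) (hMtpos : ∀ m, 0 < Mt m)
    (D : ((𝒳 × 𝒴) → ℝ) → ((𝒳 × 𝒴) → ℝ) → ℝ) (hD : IsModelDistance D)
    (r : ℝ) (hr : 0 ≤ r) :
    ConvexOn ℝ Z (fun z =>
      sSup {v : ℝ | ∃ M : (𝒳 × 𝒴) → ℝ, IsModel M ∧ D M Mt ≤ r ∧
        v = (∑ m, w m * L z m.2 * M m) / (∑ m, w m * M m)}) := by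
  -- denominator positivity
  have hden : ∀ M : (𝒳 × 𝒴) → ℝ, IsModel M → 0 < ∑ m, w m * M m := by
    intro M hM
    obtain ⟨m0, hm0⟩ : ∃ m, 0 < M m := by
      by_contra h
      push_neg at h
      have : ∑ m, M m ≤ 0 := Finset.sum_nonpos (fun m _ => h m)
      linarith [hM.2]
    have h1 : (0:ℝ) < w m0 * M m0 := mul_pos (hw m0) hm0
    have h2 : w m0 * M m0 ≤ ∑ m, w m * M m :=
      Finset.single_le_sum (fun m _ => mul_nonneg (hw m).le (hM.1 m)) (mem_univ m0)
    linarith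
  set α : ((𝒳 × 𝒴) → ℝ) → (𝒳 × 𝒴) → ℝ :=
    fun M m => w m * M m / (∑ m, w m * M m) with hα
  have hαnn : ∀ M, IsModel M → ∀ m, 0 ≤ α M m := by
    intro M hM m
    exact div_nonneg (mul_nonneg (hw m).le (hM.1 m)) (hden M hM).le
  have hαsum : ∀ M, IsModel M → ∑ m, α M m = 1 := by
    intro M hM
    rw [hα]
    rw [← Finset.sum_div]
    exact div_self (hden M hM).ne'
  -- rewrite the cost as a convex combination
  have hrw : ∀ (z : Fin p → ℝ) (M : (𝒳 × 𝒴) → ℝ),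
      (∑ m, w m * L z m.2 * M m) / (∑ m, w m * M m) = ∑ m, α M m * L z m.2 := by
    intro z M
    rw [hα, Finset.sum_div]
    congr 1
    funext m
    ring
  -- bound: elements of the set are ≤ max of L z
  have hbound : ∀ (z : Fin p → ℝ) (M : (𝒳 × 𝒴) → ℝ), IsModel M →
      ∑ m, α M m * L z m.2 ≤ univ.sup' univ_nonempty (fun m : 𝒳 × 𝒴 => L z m.2) := by
    intro z M hM
    calc ∑ m, α M m * L z m.2
        ≤ ∑ m, α M m * univ.sup' univ_nonempty (fun m : 𝒳 × 𝒴 => L z m.2) := by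
          refine Finset.sum_le_sum fun m _ => ?_
          exact mul_le_mul_of_nonneg_left (Finset.le_sup' (fun m : 𝒳 × 𝒴 => L z m.2) (mem_univ m)) (hαnn M hM m)
      _ = 1 * univ.sup' univ_nonempty (fun m : 𝒳 × 𝒴 => L z m.2) := by
          rw [← Finset.sum_mul, hαsum M hM]
      _ = _ := one_mul _
  have hbdd : ∀ z : Fin p → ℝ, BddAbove {v : ℝ | ∃ M : (𝒳 × 𝒴) → ℝ, IsModel M ∧ D M Mt ≤ r ∧
      v = (∑ m, w m * L z m.2 * M m) / (∑ m, w m * M m)} := by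
    intro z
    refine ⟨univ.sup' univ_nonempty (fun m : 𝒳 × 𝒴 => L z m.2), ?_⟩
    rintro v ⟨M, hM, -, rfl⟩
    rw [hrw]
    exact hbound z M hM
  have hne : ∀ z : Fin p → ℝ, ((∑ m, w m * L z m.2 * Mt m) / (∑ m, w m * Mt m)) ∈
      {v : ℝ | ∃ M : (𝒳 × 𝒴) → ℝ, IsModel M ∧ D M Mt ≤ r ∧
      v = (∑ m, w m * L z m.2 * M m) / (∑ m, w m * M m)} := by
    intro z
    exact ⟨Mt, hMt, by rw [(hD.2.2 Mt Mt hMt hMt).2 rfl]; exact hr, rfl⟩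
  constructor
  · exact hZ
  · intro x hx y hy a b ha hb hab
    refine csSup_le ⟨_, hne _⟩ ?_
    rintro v ⟨M, hM, hDM, rfl⟩
    have hx' : (∑ m, w m * L x m.2 * M m) / (∑ m, w m * M m) ≤
        sSup {v : ℝ | ∃ M : (𝒳 × 𝒴) → ℝ, IsModel M ∧ D M Mt ≤ r ∧
          v = (∑ m, w m * L x m.2 * M m) / (∑ m, w m * M m)} :=
      le_csSup (hbdd x) ⟨M, hM, hDM, rfl⟩
    have hy' : (∑ m, w m * L y m.2 * M m) / (∑ m, w m * M m) ≤
        sSup {v : ℝ | ∃ M : (𝒳 × 𝒴) → ℝ, IsModel M ∧ D M Mt ≤ r ∧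
          v = (∑ m, w m * L y m.2 * M m) / (∑ m, w m * M m)} :=
      le_csSup (hbdd y) ⟨M, hM, hDM, rfl⟩
    have hcomb : (∑ m, w m * L (a • x + b • y) m.2 * M m) / (∑ m, w m * M m) ≤
        a * ((∑ m, w m * L x m.2 * M m) / (∑ m, w m * M m)) +
        b * ((∑ m, w m * L y m.2 * M m) / (∑ m, w m * M m)) := by
      rw [hrw, hrw, hrw, Finset.mul_sum, Finset.mul_sum, ← Finset.sum_add_distrib]
      refine Finset.sum_le_sum fun m _ => ?_
      have hLle : L (a • x + b • y) m.2 ≤ a * L x m.2 + b * L y m.2 :=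
        (hL m.2).2 hx hy ha hb hab
      have := mul_le_mul_of_nonneg_left hLle (hαnn M hM m)
      nlinarith [hαnn M hM m]
    calc (∑ m, w m * L (a • x + b • y) m.2 * M m) / (∑ m, w m * M m)
        ≤ a * ((∑ m, w m * L x m.2 * M m) / (∑ m, w m * M m)) +
          b * ((∑ m, w m * L y m.2 * M m) / (∑ m, w m * M m)) := hcomb
      _ ≤ _ := add_le_add (mul_le_mul_of_nonneg_left hx' ha)
          (mul_le_mul_of_nonneg_left hy' hb)
end

section
/- Let Z ⊆ ℝ^p be convex, let L : Z × 𝒴 → ℝ be such that z ↦ L(z, y) is convex on Z for every label y appearing in 𝔐, let r ≥ 0, let D be a model distance function, and assume 1 ≤ k ≤ n and that n·M_t(m) is an integer for every m ∈ 𝔐. Then the robust nearest-neighbors cost z ↦ max over j ∈ {1,…,J} of sup{ (Σ_{(x,y)∈N_j} w(x,y)·L(z,y)·M(x,y)) / (Σ_{(x,y)∈N_j} w(x,y)·M(x,y)) : M a model with M ∈ 𝒩_j and D(M, M_t) ≤ r } (empty suprema being −∞) is a real-valued convex function on Z. -/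
open Finset

/-- With a loss `L(z, y)` convex in the decision `z`, the
robust nearest-neighbors cost
`z ↦ max_j sup { c_j(z, M) : M ∈ 𝒩_j, D(M, M_t) ≤ r }` (computed in
`ℝ ∪ {−∞}`, empty suprema being `−∞`) takes finite real values on `Z` and is a
convex function of the decision on the convex feasible set `Z`. -/
theorem robust_nearest_neighbors_cost_convexOn
    {𝒳 𝒴 : Type*} [Fintype 𝒳] [Fintype 𝒴] [Nonempty 𝒳] [Nonempty 𝒴]
    {p : ℕ} (Z : Set (Fin p → ℝ)) (hZ : Convex ℝ Z)
    (L : (Fin p → ℝ) → 𝒴 → ℝ) (hL : ∀ y, ConvexOn ℝ Z (fun z => L z y))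
    (w : 𝒳 × 𝒴 → ℝ) (hw : ∀ m, 0 < w m)
    (Mt : 𝒳 × 𝒴 → ℝ) (hMt : IsModel Mt) (hMtpos : ∀ m, 0 < Mt m)
    (D : ((𝒳 × 𝒴) → ℝ) → ((𝒳 × 𝒴) → ℝ) → ℝ) (hD : IsModelDistance D)
    (n k : ℕ) (hn : 1 ≤ n) (hk : 1 ≤ k) (hkn : k ≤ n)
    (hMtemp : ∀ m, ∃ c : ℕ, (n : ℝ) * Mt m = (c : ℝ))
    (J : ℕ) (N : ℕ → Finset (𝒳 × 𝒴))
    (hN0 : N 0 = ∅) (hNJ : N J = Finset.univ)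
    (hNcard : ∀ j ≤ J, (N j).card = j)
    (hNmono : ∀ j < J, N j ⊆ N (j + 1))
    (r : ℝ) (hr : 0 ≤ r)
    (G : (Fin p → ℝ) → EReal)
    (hG : G = fun z => ⨆ j ∈ Finset.Icc 1 J,
        sSup {v : EReal | ∃ M : (𝒳 × 𝒴) → ℝ, IsModel M ∧
          MemNbhdModelSet N n k j M ∧ D M Mt ≤ r ∧
          v = (((∑ m ∈ N j, w m * L z m.2 * M m) / (∑ m ∈ N j, w m * M m) : ℝ) : EReal)}) :
    (∀ z ∈ Z, ∃ y : ℝ, G z = (y : EReal)) ∧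
    ConvexOn ℝ Z (fun z => (G z).toReal) := by
  classical
  have hnR : (0:ℝ) < n := by exact_mod_cast hn
  have hkR : (0:ℝ) < k := by exact_mod_cast hk
  -- positivity of denominators
  have hden : ∀ (j : ℕ) (M : 𝒳 × 𝒴 → ℝ), (∀ m, 0 ≤ M m) →
      MemNbhdModelSet N n k j M → 0 < ∑ m ∈ N j, w m * M m := by
    intro j M hM0 hmem
    have h1 : (0:ℝ) < ∑ m ∈ N j, M m := lt_of_lt_of_le (div_pos hkR hnR) hmem.1
    have h2 : ∃ m ∈ N j, (0:ℝ) < M m := by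
      by_contra h
      push_neg at h
      have : ∑ m ∈ N j, M m ≤ 0 := Finset.sum_nonpos fun m hm => h m hm
      linarith
    obtain ⟨m0, hm0, hm0p⟩ := h2
    exact Finset.sum_pos' (fun m _ => mul_nonneg (hw m).le (hM0 m))
      ⟨m0, hm0, mul_pos (hw m0) hm0p⟩
  -- a uniform upper bound for the ratios
  have hne : (Finset.univ : Finset 𝒴).Nonempty := Finset.univ_nonempty
  set B : (Fin p → ℝ) → ℝ := fun z => Finset.univ.sup' hne (fun y => L z y) with hBdef
  have hratio : ∀ (z : Fin p → ℝ) (j : ℕ) (M : 𝒳 × 𝒴 → ℝ), (∀ m, 0 ≤ M m) →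
      MemNbhdModelSet N n k j M →
      (∑ m ∈ N j, w m * L z m.2 * M m) / (∑ m ∈ N j, w m * M m) ≤ B z := by
    intro z j M hM0 hmem
    have hd := hden j M hM0 hmem
    rw [div_le_iff₀ hd]
    calc ∑ m ∈ N j, w m * L z m.2 * M m
        ≤ ∑ m ∈ N j, B z * (w m * M m) := by
          apply Finset.sum_le_sum
          intro m _
          have hLB : L z m.2 ≤ B z := Finset.le_sup' (fun y => L z y) (Finset.mem_univ m.2)
          have hnn : 0 ≤ w m * M m := mul_nonneg (hw m).le (hM0 m)
          nlinarith [mul_le_mul_of_nonneg_right hLB hnn]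
      _ = B z * ∑ m ∈ N j, w m * M m := by rw [Finset.mul_sum]
  -- the reference model belongs to exactly one model set; find it
  have hnatsum : ∀ j : ℕ, ∃ c : ℕ, (n:ℝ) * ∑ m ∈ N j, Mt m = (c:ℝ) := by
    intro j
    choose c hc using hMtemp
    refine ⟨∑ m ∈ N j, c m, ?_⟩
    rw [Finset.mul_sum]
    push_cast
    exact Finset.sum_congr rfl fun m _ => hc m
  have hPJ : (k:ℝ)/n ≤ ∑ m ∈ N J, Mt m := by
    rw [hNJ, hMt.2, div_le_one hnR]
    exact_mod_cast hkn
  have hex : ∃ j, (k:ℝ)/n ≤ ∑ m ∈ N j, Mt m := ⟨J, hPJ⟩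
  set j0 := Nat.find hex with hj0def
  have hj0P : (k:ℝ)/n ≤ ∑ m ∈ N j0, Mt m := Nat.find_spec hex
  have hj0J : j0 ≤ J := Nat.find_min' hex hPJ
  have hj01 : 1 ≤ j0 := by
    rcases Nat.eq_zero_or_pos j0 with h | h
    · exfalso
      rw [h, hN0, Finset.sum_empty] at hj0P
      have := div_pos hkR hnR
      linarith
    · exact h
  have hj0pre : ∑ m ∈ N (j0 - 1), Mt m ≤ ((k:ℝ) - 1) / n := by
    have hlt : ¬ ((k:ℝ)/n ≤ ∑ m ∈ N (j0-1), Mt m) := Nat.find_min hex (by omega)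
    push_neg at hlt
    obtain ⟨c, hc⟩ := hnatsum (j0 - 1)
    have hcn : (c:ℝ) < k := by
      have h1 : (n:ℝ) * ∑ m ∈ N (j0-1), Mt m < (n:ℝ) * ((k:ℝ)/n) :=
        mul_lt_mul_of_pos_left hlt hnR
      rw [hc, mul_div_cancel₀ _ (ne_of_gt hnR)] at h1
      exact h1
    have hck : c < k := by exact_mod_cast hcn
    have hck1 : (c:ℝ) ≤ (k:ℝ) - 1 := by
      have h2 : c + 1 ≤ k := hck
      have h3 : ((c:ℝ) + 1) ≤ (k:ℝ) := by exact_mod_cast h2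
      linarith
    have hsum : ∑ m ∈ N (j0-1), Mt m = (c:ℝ) / n := by
      rw [eq_div_iff (ne_of_gt hnR)]
      linarith [hc]
    rw [hsum]
    gcongr
  have hMtmem : MemNbhdModelSet N n k j0 Mt := ⟨hj0P, hj0pre⟩
  have hDMt : D Mt Mt ≤ r := by
    rw [(hD.2.2 Mt Mt hMt hMt).mpr rfl]
    exact hr
  -- upper and lower bounds for G
  have hGub : ∀ z, G z ≤ ((B z : ℝ) : EReal) := by
    intro z
    simp only [hG]
    refine iSup₂_le fun j hj => sSup_le ?_
    rintro v ⟨M, hM, hmem, -, rfl⟩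
    exact_mod_cast hratio z j M hM.1 hmem
  have hGlb : ∀ z,
      (((∑ m ∈ N j0, w m * L z m.2 * Mt m) / (∑ m ∈ N j0, w m * Mt m) : ℝ) : EReal) ≤ G z := by
    intro z
    simp only [hG]
    exact le_iSup₂_of_le j0 (Finset.mem_Icc.2 ⟨hj01, hj0J⟩)
      (le_sSup ⟨Mt, hMt, hMtmem, hDMt, rfl⟩)
  have hfin : ∀ z, ∃ y : ℝ, G z = (y : EReal) := by
    intro z
    have h1 := hGlb z
    have h2 := hGub z
    refine ⟨(G z).toReal, (EReal.coe_toReal ?_ ?_).symm⟩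
    · exact ne_top_of_le_ne_top (EReal.coe_ne_top _) h2
    · intro h
      rw [h, le_bot_iff] at h1
      exact EReal.coe_ne_bot _ h1
  refine ⟨fun z _ => hfin z, hZ, ?_⟩
  intro x hx y hy a b ha hb hab
  obtain ⟨gx, hgx⟩ := hfin x
  obtain ⟨gy, hgy⟩ := hfin y
  obtain ⟨gz, hgz⟩ := hfin (a • x + b • y)
  simp only [hgx, hgy, hgz, EReal.toReal_coe, smul_eq_mul]
  have key : G (a • x + b • y) ≤ ((a * gx + b * gy : ℝ) : EReal) := by
    simp only [hG]
    refine iSup₂_le fun j hj => sSup_le ?_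
    rintro v ⟨M, hM, hmem, hDr, rfl⟩
    have hd := hden j M hM.1 hmem
    have hc1 : (∑ m ∈ N j, w m * L x m.2 * M m) / (∑ m ∈ N j, w m * M m) ≤ gx := by
      have h : (((∑ m ∈ N j, w m * L x m.2 * M m) / (∑ m ∈ N j, w m * M m) : ℝ) : EReal)
          ≤ G x := by
        simp only [hG]
        exact le_iSup₂_of_le j hj (le_sSup ⟨M, hM, hmem, hDr, rfl⟩)
      rw [hgx] at h
      exact_mod_cast h
    have hc2 : (∑ m ∈ N j, w m * L y m.2 * M m) / (∑ m ∈ N j, w m * M m) ≤ gy := by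
      have h : (((∑ m ∈ N j, w m * L y m.2 * M m) / (∑ m ∈ N j, w m * M m) : ℝ) : EReal)
          ≤ G y := by
        simp only [hG]
        exact le_iSup₂_of_le j hj (le_sSup ⟨M, hM, hmem, hDr, rfl⟩)
      rw [hgy] at h
      exact_mod_cast h
    have hnum : ∑ m ∈ N j, w m * L (a • x + b • y) m.2 * M m ≤
        a * ∑ m ∈ N j, w m * L x m.2 * M m + b * ∑ m ∈ N j, w m * L y m.2 * M m := by
      rw [Finset.mul_sum, Finset.mul_sum, ← Finset.sum_add_distrib]
      apply Finset.sum_le_sum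
      intro m _
      have hconv := (hL m.2).2 hx hy ha hb hab
      simp only [smul_eq_mul] at hconv
      have hnn : 0 ≤ w m * M m := mul_nonneg (hw m).le (hM.1 m)
      nlinarith [mul_le_mul_of_nonneg_right hconv hnn]
    have hdiv : (∑ m ∈ N j, w m * L (a • x + b • y) m.2 * M m) / (∑ m ∈ N j, w m * M m) ≤
        a * ((∑ m ∈ N j, w m * L x m.2 * M m) / (∑ m ∈ N j, w m * M m)) +
        b * ((∑ m ∈ N j, w m * L y m.2 * M m) / (∑ m ∈ N j, w m * M m)) := by
      have heq : a * ((∑ m ∈ N j, w m * L x m.2 * M m) / (∑ m ∈ N j, w m * M m)) +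
          b * ((∑ m ∈ N j, w m * L y m.2 * M m) / (∑ m ∈ N j, w m * M m)) =
          (a * ∑ m ∈ N j, w m * L x m.2 * M m + b * ∑ m ∈ N j, w m * L y m.2 * M m) /
            (∑ m ∈ N j, w m * M m) := by
        ring
      rw [heq]
      gcongr
    have hfinal : (∑ m ∈ N j, w m * L (a • x + b • y) m.2 * M m) /
        (∑ m ∈ N j, w m * M m) ≤ a * gx + b * gy := by
      nlinarith [mul_le_mul_of_nonneg_left hc1 ha, mul_le_mul_of_nonneg_left hc2 hb]
    exact_mod_cast hfinal
  rw [hgz] at key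
  exact_mod_cast key
end
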